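/- arXiv:1511.07537 — 9 statements merged into one kernel-verified Lean document; each statement's English description precedes it below -/
import Mathlib

section
/- Let A be the adjacency matrix of a strongly connected k-regular normal digraph Γ on n vertices, and let θ_min be the minimum of the real parts of the eigenvalues of A. Then every coclique C of Γ satisfies |C| ≤ n(−θ_min)/(k − θ_min). -/
/-!
Since `A` is normal, `A` and `A + Aᵀ` commute, so every eigenspace of the symmetric matrix
`A + Aᵀ` contains an eigenvector `w` of `A`. If `(A + Aᵀ) w = μ w` and `A w = z w`, then
`Aᵀ w = (μ - z) w`, and `μ - z` is an eigenvalue of `Aᵀ`, hence of `A`; so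
`μ = Re z + Re (μ - z) ≥ 2 θmin`. Therefore `A + Aᵀ - 2 θmin` is positive semidefinite, i.e.
`θmin ‖v‖² ≤ vᵀ A v` for every real vector `v`. Testing this on `v = n 1_C - |C| 1` gives
`θmin n |C| (n - |C|) ≤ -k n |C|²`, which is the bound; testing it on `e_i - e_j` for an edge
`(i, j)` shows `θmin < 0`.
-/

open Matrix Finset

namespace Module.End

variable {K V : Type*} [Field K] [AddCommGroup V] [Module K V]

theorem exists_hasEigenvector_of_commute [IsAlgClosed K] [FiniteDimensional K V]
    {f g : End K V} (h : Commute f g) {μ : K} (hμ : f.HasEigenvalue μ) :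
    ∃ ν v, f.HasEigenvector μ v ∧ g.HasEigenvector ν v := by
  have : Nontrivial (f.eigenspace μ) := Submodule.nontrivial_iff_ne_bot.mpr hμ
  obtain ⟨ν, hν⟩ := exists_eigenvalue (g.restrict (mapsTo_genEigenspace_of_comm h μ 1))
  obtain ⟨w, hw_mem, hw_ne⟩ := hν.exists_hasEigenvector
  refine ⟨ν, w, ⟨w.2, by simpa using hw_ne⟩, ?_, by simpa using hw_ne⟩
  rw [mem_eigenspace_iff] at hw_mem ⊢
  exact congrArg Subtype.val hw_mem

theorem exists_mem_spectrum_sub_mem_spectrum [IsAlgClosed K] [FiniteDimensional K V]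
    {f g : End K V} (h : Commute f g) {μ : K} (hμ : μ ∈ spectrum K (f + g)) :
    ∃ θ ∈ spectrum K f, μ - θ ∈ spectrum K g := by
  obtain ⟨θ, v, hv, hfv⟩ :=
    exists_hasEigenvector_of_commute ((Commute.refl f).add_left h.symm)
      (hasEigenvalue_iff_mem_spectrum.mpr hμ)
  have hgv : g.HasEigenvector (μ - θ) v := by
    refine ⟨mem_eigenspace_iff.mpr ?_, hv.2⟩
    rw [sub_smul, ← hv.apply_eq_smul, ← hfv.apply_eq_smul, LinearMap.add_apply,
      add_sub_cancel_left]
  exact ⟨θ, (hasEigenvalue_of_hasEigenvector hfv).mem_spectrum,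
    (hasEigenvalue_of_hasEigenvector hgv).mem_spectrum⟩

end Module.End

namespace Matrix

variable {n : Type*} [Fintype n]

section Spectrum

variable [DecidableEq n]

theorem spectrum_transpose {K : Type*} [Field K] (M : Matrix n n K) :
    spectrum K Mᵀ = spectrum K M := by
  ext μ
  rw [mem_spectrum_iff_isRoot_charpoly, mem_spectrum_iff_isRoot_charpoly, charpoly_transpose]

theorem map_mem_spectrum_map {K L : Type*} [Field K] [Field L] (f : K →+* L) {M : Matrix n n K}
    {μ : K} (hμ : μ ∈ spectrum K M) : f μ ∈ spectrum L (M.map f) := by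
  rw [mem_spectrum_iff_isRoot_charpoly, charpoly_map]
  exact (mem_spectrum_iff_isRoot_charpoly.mp hμ).map

theorem exists_mem_spectrum_sub_mem_spectrum {K : Type*} [Field K] [IsAlgClosed K]
    {M N : Matrix n n K} (h : Commute M N) {μ : K} (hμ : μ ∈ spectrum K (M + N)) :
    ∃ θ ∈ spectrum K M, μ - θ ∈ spectrum K N := by
  rw [← AlgEquiv.spectrum_eq toLinAlgEquiv', map_add] at hμ
  simpa only [AlgEquiv.spectrum_eq] using
    Module.End.exists_mem_spectrum_sub_mem_spectrum (h.map toLinAlgEquiv') hμ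

theorem two_mul_le_of_mem_spectrum_add_transpose {A : Matrix n n ℝ} (hA : A * Aᵀ = Aᵀ * A)
    {θ : ℝ} (hθ : ∀ z ∈ spectrum ℂ (A.map Complex.ofReal), θ ≤ z.re) {μ : ℝ}
    (hμ : μ ∈ spectrum ℝ (A + Aᵀ)) : 2 * θ ≤ μ := by
  set Ac := A.map Complex.ofRealHom
  have hcomm : Commute Ac Acᵀ := by
    have := congrArg (·.map Complex.ofRealHom) hA
    simp only [Matrix.map_mul, transpose_map] at this
    exact this
  have hμc : (μ : ℂ) ∈ spectrum ℂ (Ac + Acᵀ) := by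
    have hmap : (A + Aᵀ).map Complex.ofRealHom = Ac + Acᵀ := by ext; simp [Ac]
    simpa [hmap] using map_mem_spectrum_map Complex.ofRealHom hμ
  obtain ⟨z, hz, hμz⟩ := exists_mem_spectrum_sub_mem_spectrum hcomm hμc
  rw [spectrum_transpose] at hμz
  have hz_re := hθ z hz
  have hμz_re := hθ _ hμz
  rw [Complex.sub_re, Complex.ofReal_re] at hμz_re
  linarith

theorem mul_dotProduct_self_le_dotProduct_mulVec_of_normal {A : Matrix n n ℝ}
    (hA : A * Aᵀ = Aᵀ * A) {θ : ℝ} (hθ : ∀ z ∈ spectrum ℂ (A.map Complex.ofReal), θ ≤ z.re)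
    (v : n → ℝ) :
    θ * (v ⬝ᵥ v) ≤ v ⬝ᵥ (A *ᵥ v) := by
  have hpsd : (A + Aᵀ - algebraMap ℝ (Matrix n n ℝ) (2 * θ)).PosSemidef := by
    refine posSemidef_iff_isHermitian_and_spectrum_nonneg.mpr ⟨?_, ?_⟩
    · rw [← conjTranspose_eq_transpose_of_trivial, Algebra.algebraMap_eq_smul_one]
      exact (isHermitian_add_transpose_self A).sub (isHermitian_one.smul (.all _))
    · rw [← spectrum.sub_singleton_eq]
      rintro _ ⟨μ, hμ, _, rfl, rfl⟩
      exact sub_nonneg.mpr (two_mul_le_of_mem_spectrum_add_transpose hA hθ hμ)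
  have hquad := hpsd.dotProduct_mulVec_nonneg v
  rw [star_trivial, sub_mulVec, add_mulVec, dotProduct_sub, dotProduct_add,
    dotProduct_transpose_mulVec, Algebra.algebraMap_eq_smul_one, smul_mulVec, one_mulVec,
    dotProduct_smul, smul_eq_mul] at hquad
  linarith

end Spectrum

theorem dotProduct_indicator_one {R : Type*} [NonAssocSemiring R] (v : n → R) (S : Finset n) :
    v ⬝ᵥ (S : Set n).indicator 1 = ∑ x ∈ S, v x := by
  classical
  simp [dotProduct, Set.indicator_apply]

theorem indicator_one_dotProduct_indicator_one [DecidableEq n] (S T : Finset n) :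
    (S : Set n).indicator (1 : n → ℝ) ⬝ᵥ (T : Set n).indicator 1 = #(S ∩ T) := by
  simp [dotProduct_indicator_one, Set.indicator_apply, inter_comm]

theorem indicator_one_dotProduct_mulVec_indicator_one {R : Type*} [CommSemiring R]
    (A : Matrix n n R) (S T : Finset n) :
    (S : Set n).indicator 1 ⬝ᵥ (A *ᵥ (T : Set n).indicator 1) = ∑ x ∈ S, ∑ y ∈ T, A x y := by
  rw [dotProduct_comm, dotProduct_indicator_one]
  exact sum_congr rfl fun x _ => dotProduct_indicator_one (A x) T

theorem two_mul_le_neg_add_of_forall_le_dotProduct_mulVec {A : Matrix n n ℝ} {θ : ℝ}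
    (hθ : ∀ v, θ * (v ⬝ᵥ v) ≤ v ⬝ᵥ (A *ᵥ v)) (hdiag : ∀ i, A i i = 0) {i j : n}
    (hij : i ≠ j) :
    2 * θ ≤ -(A i j + A j i) := by
  classical
  have h := hθ (Pi.single i 1 - Pi.single j 1)
  simp [mulVec_sub, dotProduct_sub, sub_dotProduct, mulVec_single, single_dotProduct, hdiag, hij,
    hij.symm] at h
  linarith

theorem card_mul_sub_le_of_forall_le_dotProduct_mulVec {A : Matrix n n ℝ} {k θ : ℝ}
    (hrow : ∀ i, ∑ j, A i j = k) (hcol : ∀ j, ∑ i, A i j = k)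
    (hθ : ∀ v, θ * (v ⬝ᵥ v) ≤ v ⬝ᵥ (A *ᵥ v)) (hθ0 : θ ≤ 0) {C : Finset n}
    (hC : ∀ x ∈ C, ∀ y ∈ C, A x y = 0) :
    #C * (k - θ) ≤ Fintype.card n * -θ := by
  classical
  have hCC : ∑ x ∈ C, ∑ y ∈ C, A x y = 0 := sum_eq_zero fun x hx => sum_eq_zero (hC x hx)
  have hCu : ∑ x ∈ C, ∑ y, A x y = #C * k := by simp [hrow]
  have huC : ∑ x, ∑ y ∈ C, A x y = #C * k := sum_comm.trans (by simp [hcol])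
  have huu : ∑ x, ∑ y, A x y = Fintype.card n * k := by simp [hrow]
  have h := hθ ((Fintype.card n : ℝ) • (C : Set n).indicator 1 -
    (#C : ℝ) • ((univ : Finset n) : Set n).indicator 1)
  simp only [mulVec_sub, mulVec_smul, dotProduct_sub, sub_dotProduct, dotProduct_smul,
    smul_dotProduct, smul_eq_mul, indicator_one_dotProduct_mulVec_indicator_one,
    indicator_one_dotProduct_indicator_one, hCC, hCu, huC, huu, inter_self, inter_univ,
    univ_inter, card_univ] at h
  have hcN : (#C : ℝ) ≤ Fintype.card n := by exact_mod_cast card_le_univ C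
  obtain rfl | hC₀ := C.eq_empty_or_nonempty
  · simp only [card_empty, Nat.cast_zero, zero_mul]
    exact mul_nonneg (Nat.cast_nonneg _) (neg_nonneg.mpr hθ0)
  · have hc : (0 : ℝ) < #C := by exact_mod_cast hC₀.card_pos
    nlinarith [mul_pos hc (hc.trans_le hcN)]

end Matrix

theorem hoffman_coclique_bound_general
    (N : ℕ) (k θmin : ℝ) (A : Matrix (Fin N) (Fin N) ℝ)
    (h01 : ∀ i j, A i j = 0 ∨ A i j = 1)
    (hdiag : ∀ i, A i i = 0)
    (hnormal : A * Aᵀ = Aᵀ * A)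
    (hrow : ∀ i, ∑ j, A i j = k)
    (hcol : ∀ i, ∑ j, A j i = k)
    (hedge : ∃ i j, A i j = 1)
    (hmin_le : ∀ θ ∈ spectrum ℂ (A.map Complex.ofReal), θmin ≤ θ.re)
    (C : Finset (Fin N))
    (hC : ∀ x ∈ C, ∀ y ∈ C, A x y = 0) :
    (C.card : ℝ) ≤ (N : ℝ) * (-θmin) / (k - θmin) := by
  obtain ⟨i, j, hij⟩ := hedge
  have hnonneg : ∀ i j, 0 ≤ A i j := fun i j => by rcases h01 i j with h | h <;> simp [h]
  have hquad := mul_dotProduct_self_le_dotProduct_mulVec_of_normal hnormal hmin_le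
  have hne : i ≠ j := by rintro rfl; simp [hdiag] at hij
  have hθ : 2 * θmin ≤ -(A i j + A j i) :=
    two_mul_le_neg_add_of_forall_le_dotProduct_mulVec hquad hdiag hne
  have hk : 0 ≤ k := hrow i ▸ sum_nonneg fun j _ => hnonneg i j
  rw [le_div_iff₀ (by linarith [hnonneg j i])]
  simpa using card_mul_sub_le_of_forall_le_dotProduct_mulVec hrow hcol hquad
    (by linarith [hnonneg j i]) hC

/-- Hoffman's coclique bound for strongly connected regular normal digraphs. -/
theorem hoffman_coclique_bound
    (N : ℕ) (k θmin : ℝ) (A : Matrix (Fin N) (Fin N) ℝ)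
    (h01 : ∀ i j, A i j = 0 ∨ A i j = 1)
    (hdiag : ∀ i, A i i = 0)
    (hnormal : A * Aᵀ = Aᵀ * A)
    (hrow : ∀ i, ∑ j, A i j = k)
    (hcol : ∀ i, ∑ j, A j i = k)
    (hconn : ∀ i j : Fin N, Relation.ReflTransGen (fun x y => A x y = 1) i j)
    (hedge : ∃ i j, A i j = 1)
    (hmin_mem : ∃ θ ∈ spectrum ℂ (A.map Complex.ofReal), θ.re = θmin)
    (hmin_le : ∀ θ ∈ spectrum ℂ (A.map Complex.ofReal), θmin ≤ θ.re)
    (C : Finset (Fin N))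
    (hC : ∀ x ∈ C, ∀ y ∈ C, A x y = 0) :
    (C.card : ℝ) ≤ (N : ℝ) * (-θmin) / (k - θmin) :=
  hoffman_coclique_bound_general N k θmin A h01 hdiag hnormal hrow hcol hedge hmin_le C hC
end

section
/- Let A be the adjacency matrix of a strongly connected k-regular normal digraph Γ on n vertices with θ_min the minimum real part of eigenvalues of A. If a coclique C attains the bound |C| = n(−θ_min)/(k − θ_min), then for every vertex x ∉ C, the number of arcs from x into C plus the number of arcs from C into x equals −2θ_min. -/
/-!
Let `S = A + Aᵀ - 2θ_min I`. Since `A` is normal, every eigenvalue of the symmetric matrix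
`A + Aᵀ` has the form `θ + θ̄ = 2 Re θ` for an eigenvalue `θ` of `A`, so `S` is positive
semidefinite. For the vector `z = n 1_C - |C| 1` the quadratic form `zᵀ S z` expands, using that
`C` is a coclique and `A + Aᵀ` has constant row sums `2k`, into a multiple of
`|C| (k - θ_min) + n θ_min`, which vanishes in the equality case. Hence `S z = 0`, and the
coordinate of `S z` at a vertex `x ∉ C` is `n (s_x + 2θ_min)`, where `s_x` is the in-count plus
the out-count of `x`.
-/

open Matrix Finset
open scoped ComplexOrder

lemma algebraMap_le_add_star_of_le_re {A : Type*} [CStarAlgebra A] [PartialOrder A]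
    [StarOrderedRing A] (a : A) [IsStarNormal a] {r : ℝ}
    (h : ∀ z ∈ spectrum ℂ a, r ≤ z.re) :
    algebraMap ℂ A (2 * r) ≤ a + star a := by
  have hcfc : cfc (fun z : ℂ => z + star z - (2 * r : ℂ)) a =
      a + star a - algebraMap ℂ A (2 * r) := by
    rw [cfc_sub (fun z : ℂ => z + star z) (fun _ => (2 * r : ℂ)) a,
      cfc_add a (fun z => z) star, cfc_id' ℂ a, cfc_star_id a, cfc_const _ a]
  rw [← sub_nonneg, ← hcfc]
  refine cfc_nonneg fun z hz => ?_
  rw [Complex.nonneg_iff]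
  simp only [RCLike.star_def, Complex.sub_re, Complex.add_re, Complex.conj_re, Complex.mul_re,
    Complex.re_ofNat, Complex.ofReal_re, Complex.im_ofNat, Complex.ofReal_im, mul_zero, sub_zero,
    sub_nonneg, Complex.sub_im, Complex.add_im, Complex.conj_im, add_neg_cancel, Complex.mul_im,
    zero_mul, add_zero, sub_self, and_true]
  linarith [h z hz]

namespace Matrix

variable {n : Type*}

lemma PosSemidef.transpose_eq_of_sub_smul_one [DecidableEq n] {B : Matrix n n ℝ} {μ : ℝ}
    (hS : (B - μ • 1).PosSemidef) : Bᵀ = B := by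
  have hB : B.IsHermitian := by
    simpa using hS.isHermitian.add (isHermitian_one.smul (IsSelfAdjoint.all μ))
  simpa [IsHermitian, conjTranspose_eq_transpose_of_trivial] using hB.eq

variable [Fintype n]

lemma PosSemidef.of_map_ofReal {B : Matrix n n ℝ} (hB : (B.map Complex.ofReal).PosSemidef) :
    B.PosSemidef := by
  refine .of_dotProduct_mulVec_nonneg ?_ fun x => ?_
  · ext i j
    simpa using congrFun₂ hB.isHermitian i j
  · have hx : star (Complex.ofReal ∘ x) ⬝ᵥ (B.map Complex.ofReal *ᵥ Complex.ofReal ∘ x) =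
        ((star x ⬝ᵥ B *ᵥ x : ℝ) : ℂ) := by
      simp [dotProduct, mulVec]
    simpa [hx] using hB.dotProduct_mulVec_nonneg (Complex.ofReal ∘ x)

variable [DecidableEq n]

open scoped Matrix.Norms.L2Operator MatrixOrder in
lemma posSemidef_add_transpose_sub_of_le_re {A : Matrix n n ℝ} (hA : A * Aᵀ = Aᵀ * A) {r : ℝ}
    (h : ∀ z ∈ spectrum ℂ (A.map Complex.ofReal), r ≤ z.re) :
    (A + Aᵀ - (2 * r) • 1).PosSemidef := by
  have hstar : star (A.map Complex.ofReal) = Aᵀ.map Complex.ofReal := by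
    ext i j
    simp
  have : IsStarNormal (A.map Complex.ofReal) := ⟨by
    rw [commute_iff_eq, hstar]
    have := congrArg (·.map Complex.ofRealHom) hA.symm
    simp only [Matrix.map_mul] at this
    exact this⟩
  have hmap : (A + Aᵀ - (2 * r) • 1).map Complex.ofReal =
      A.map Complex.ofReal + star (A.map Complex.ofReal) - algebraMap ℂ _ (2 * r) := by
    rw [hstar, Algebra.algebraMap_eq_smul_one]
    ext i j
    by_cases hij : i = j <;> simp [hij]
  apply PosSemidef.of_map_ofReal
  rw [hmap]
  exact algebraMap_le_add_star_of_le_re _ h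

theorem sum_eq_neg_of_posSemidef_sub_smul_one {B : Matrix n n ℝ} {d μ : ℝ}
    (hS : (B - μ • 1).PosSemidef) (hB : B *ᵥ 1 = d • 1) {C : Finset n}
    (hC : ∀ i ∈ C, ∀ j ∈ C, B i j = 0)
    (hcard : #C * (d - μ) = Fintype.card n * -μ) {x : n} (hx : x ∉ C) :
    ∑ y ∈ C, B x y = -μ := by
  set c : n → ℝ := fun i => if i ∈ C then 1 else 0
  set N : ℝ := (Fintype.card n : ℝ)
  set z : n → ℝ := N • c - (#C : ℝ) • 1
  set w : n → ℝ := B *ᵥ c - μ • c + μ • 1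
  have hBc (i : n) : (B *ᵥ c) i = ∑ j ∈ C, B i j := by
    simp [c, mulVec, dotProduct, sum_ite_mem]
  -- `w` is orthogonal to both `c` and `1`, hence to `z`, so `zᵀ (B - μ) z = 0`.
  have hSz : (B - μ • 1) *ᵥ z = N • w := by
    ext i
    have hBi := congrFun hB i
    simp only [Pi.smul_apply, Pi.one_apply, smul_eq_mul, mul_one, mulVec_sub, mulVec_smul,
      sub_mulVec, smul_mulVec, one_mulVec, Pi.sub_apply, Pi.add_apply, z, w] at hBi ⊢
    linear_combination (-1) * hcard - (#C : ℝ) * hBi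
  have hcw : c ⬝ᵥ w = 0 := by
    simp only [dotProduct, c, ite_mul, one_mul, zero_mul, sum_ite_mem, univ_inter]
    refine sum_eq_zero fun i hi => ?_
    simpa [w, hBc, c, hi] using sum_eq_zero (hC i hi)
  have h1w : 1 ⬝ᵥ w = 0 := by
    have h1B : 1 ᵥ* B = d • 1 := by
      rw [← hS.transpose_eq_of_sub_smul_one, vecMul_transpose, hB]
    have h1c : 1 ⬝ᵥ c = #C := by simp [c, dotProduct]
    simp only [w, dotProduct_add, dotProduct_sub, dotProduct_mulVec, h1B, smul_dotProduct, h1c,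
      smul_eq_mul, dotProduct_smul, one_dotProduct_one]
    linear_combination hcard
  have hSz0 : (B - μ • 1) *ᵥ z = 0 := by
    refine (hS.dotProduct_mulVec_zero_iff z).1 ?_
    rw [hSz, star_trivial]
    simp [z, hcw, h1w, sub_dotProduct, dotProduct_smul]
  have hN : N ≠ 0 := by
    have : Nonempty n := ⟨x⟩
    exact Nat.cast_ne_zero.2 Fintype.card_ne_zero
  have hwx : w x = 0 := by
    simpa [hN] using congrFun (hSz.symm.trans hSz0) x
  simp only [w, Pi.add_apply, Pi.sub_apply, Pi.smul_apply, hBc, c, hx, ↓reduceIte, smul_eq_mul,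
    mul_zero, sub_zero, Pi.one_apply, mul_one] at hwx
  linarith

end Matrix

theorem hoffman_coclique_bound_equality_general
    (N : ℕ) (k θmin : ℝ) (A : Matrix (Fin N) (Fin N) ℝ)
    (h01 : ∀ i j, A i j = 0 ∨ A i j = 1)
    (hdiag : ∀ i, A i i = 0)
    (hnormal : A * Aᵀ = Aᵀ * A)
    (hrow : ∀ i, ∑ j, A i j = k)
    (hcol : ∀ i, ∑ j, A j i = k)
    (hedge : ∃ i j, A i j = 1)
    (hmin_le : ∀ θ ∈ spectrum ℂ (A.map Complex.ofReal), θmin ≤ θ.re)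
    (C : Finset (Fin N))
    (hC : ∀ x ∈ C, ∀ y ∈ C, A x y = 0)
    (heq : (C.card : ℝ) = (N : ℝ) * (-θmin) / (k - θmin)) :
    ∀ x ∉ C, (∑ y ∈ C, A x y) + (∑ y ∈ C, A y x) = -2 * θmin := by
  intro x hx
  have hS := posSemidef_add_transpose_sub_of_le_re hnormal hmin_le
  have hθ : θmin ≤ 0 := by
    have hSx := hS.diag_nonneg (i := x)
    simp only [Matrix.sub_apply, Matrix.add_apply, transpose_apply, hdiag, Matrix.smul_apply,
      one_apply_eq, smul_eq_mul] at hSx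
    linarith
  have hk : 1 ≤ k := by
    obtain ⟨i, j, hij⟩ := hedge
    rw [← hrow i, ← hij]
    exact single_le_sum (fun l _ => (h01 i l).elim (·.ge) (fun h => h ▸ zero_le_one))
      (mem_univ j)
  have hB : (A + Aᵀ) *ᵥ 1 = (2 * k) • 1 := by
    ext i
    simp [mulVec, dotProduct, sum_add_distrib, hrow, hcol, two_mul]
  have hcard : #C * (2 * k - 2 * θmin) = Fintype.card (Fin N) * -(2 * θmin) := by
    have hkθ : k - θmin ≠ 0 := by linarith
    rw [heq, Fintype.card_fin]
    field_simp
  have hsum := sum_eq_neg_of_posSemidef_sub_smul_one hS hB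
    (fun i hi j hj => by simp [hC i hi j hj, hC j hj i hi]) hcard hx
  simpa [sum_add_distrib] using hsum

/-- Equality case of Hoffman's coclique bound: every vertex outside the coclique has
in-count plus out-count into the coclique equal to `-2 θmin`. -/
theorem hoffman_coclique_bound_equality
    (N : ℕ) (k θmin : ℝ) (A : Matrix (Fin N) (Fin N) ℝ)
    (h01 : ∀ i j, A i j = 0 ∨ A i j = 1)
    (hdiag : ∀ i, A i i = 0)
    (hnormal : A * Aᵀ = Aᵀ * A)
    (hrow : ∀ i, ∑ j, A i j = k)
    (hcol : ∀ i, ∑ j, A j i = k)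
    (hconn : ∀ i j : Fin N, Relation.ReflTransGen (fun x y => A x y = 1) i j)
    (hedge : ∃ i j, A i j = 1)
    (hmin_mem : ∃ θ ∈ spectrum ℂ (A.map Complex.ofReal), θ.re = θmin)
    (hmin_le : ∀ θ ∈ spectrum ℂ (A.map Complex.ofReal), θmin ≤ θ.re)
    (C : Finset (Fin N))
    (hC : ∀ x ∈ C, ∀ y ∈ C, A x y = 0)
    (heq : (C.card : ℝ) = (N : ℝ) * (-θmin) / (k - θmin)) :
    ∀ x ∉ C, (∑ y ∈ C, A x y) + (∑ y ∈ C, A y x) = -2 * θmin :=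
  hoffman_coclique_bound_equality_general N k θmin A h01 hdiag hnormal hrow hcol hedge hmin_le C hC
    heq
end

section
/- Let A be the adjacency matrix of a strongly connected k-regular normal digraph Γ on n vertices with θ_min the minimum real part of eigenvalues of A. Suppose a coclique C attains |C| = n(−θ_min)/(k − θ_min) and exactly one eigenvalue of A has real part equal to θ_min. Then for every vertex x ∉ C, the number of y ∈ C with (x,y) ∈ E equals −θ_min. -/
open Matrix Finset

/-!
Write `θ = θmin` and `H = A + Aᵀ - 2θ I`. Since `A` is normal, `H` is the image of `A` under
`z ↦ 2 (Re z - θ)` in the continuous functional calculus, hence positive semidefinite. For the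
vector `v = 1_C - a 𝟙` with `a = |C| / N`, regularity and the coclique property give
`v* H v = 2 (a² (k - θ) N - 2 a (k - θ) |C| - θ |C|)`, which vanishes in the equality case, so
`H v = 0`. As `θ` is the only eigenvalue on the line `Re z = θ`, the function
`(z - θ) / (2 (Re z - θ))` is defined on the spectrum and turns `H v = 0` into `A v = θ v`;
the coordinate of this equation at `x ∉ C` is the claim.
-/

open scoped ComplexOrder

section CStarAlgebra

variable {𝒜 : Type*} [CStarAlgebra 𝒜] (a : 𝒜) [IsStarNormal a]

lemma cfc_add_star_sub (r : ℂ) :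
    cfc (fun z : ℂ => z + star z - r) a = a + star a - algebraMap ℂ 𝒜 r := by
  rw [cfc_sub (fun z : ℂ => z + star z) (fun _ => r) a, cfc_add a (fun z : ℂ => z) star,
    cfc_id' ℂ a, cfc_star_id (a := a), cfc_const r a]

lemma add_star_sub_nonneg [PartialOrder 𝒜] [StarOrderedRing 𝒜] {θ : ℝ}
    (hle : ∀ z ∈ spectrum ℂ a, θ ≤ z.re) :
    0 ≤ a + star a - algebraMap ℂ 𝒜 (2 * θ) := by
  rw [← cfc_add_star_sub]
  refine cfc_nonneg fun z hz => ?_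
  rw [Complex.star_def, Complex.add_conj, ← Complex.ofReal_ofNat, ← Complex.ofReal_mul,
    ← Complex.ofReal_sub, Complex.zero_le_real]
  linarith [hle z hz]

lemma exists_mul_add_star_sub_eq {θ : ℝ} (hfin : (spectrum ℂ a).Finite)
    (huniq : ∀ z ∈ spectrum ℂ a, z.re = θ → z = θ) :
    ∃ b, b * (a + star a - algebraMap ℂ 𝒜 (2 * θ)) = a - algebraMap ℂ 𝒜 θ := by
  classical
  let g : ℂ → ℂ := fun z => if z = θ then 0 else (z - θ) / (z + star z - 2 * θ)
  refine ⟨cfc g a, ?_⟩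
  have hg : ∀ z ∈ spectrum ℂ a, g z * (z + star z - 2 * θ) = z - θ := by
    intro z hz
    by_cases hzθ : z = θ
    · simp [g, hzθ]
    · have hne : z + star z - 2 * θ ≠ 0 := by
        refine fun h => hzθ (huniq z hz ?_)
        rw [Complex.star_def, Complex.add_conj, sub_eq_zero] at h
        have : 2 * z.re = 2 * θ := by exact_mod_cast h
        linarith
      simp only [g, if_neg hzθ]
      exact div_mul_cancel₀ _ hne
  rw [← cfc_add_star_sub, ← cfc_mul g _ a (hfin.continuousOn g), cfc_congr hg,
    cfc_sub (fun z : ℂ => z) (fun _ => (θ : ℂ)) a, cfc_id' ℂ a, cfc_const _ a]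

end CStarAlgebra

namespace Matrix

variable {m n R : Type*}

lemma conjTranspose_map_ofReal (A : Matrix m n ℝ) :
    (A.map Complex.ofReal)ᴴ = Aᵀ.map Complex.ofReal := by
  ext i j
  simp [conjTranspose_apply]

variable [Fintype n]

lemma map_ofReal_mulVec_one {A : Matrix m n ℝ} {k : ℝ} (hrow : ∀ i, ∑ j, A i j = k) :
    A.map Complex.ofReal *ᵥ 1 = (k : ℂ) • 1 := by
  ext i
  simp [mulVec, dotProduct, ← Complex.ofReal_sum, hrow]

lemma one_vecMul_map_ofReal {A : Matrix n m ℝ} {k : ℝ} (hcol : ∀ j, ∑ i, A i j = k) :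
    1 ᵥ* A.map Complex.ofReal = (k : ℂ) • 1 := by
  ext j
  simp [vecMul, dotProduct, ← Complex.ofReal_sum, hcol]

lemma isStarNormal_map_ofReal {A : Matrix n n ℝ} (hA : A * Aᵀ = Aᵀ * A) :
    IsStarNormal (A.map Complex.ofReal) := by
  refine ⟨?_⟩
  rw [commute_iff_eq, star_eq_conjTranspose, conjTranspose_map_ofReal]
  have h := congrArg (·.map Complex.ofRealHom) hA
  simp only [Matrix.map_mul] at h
  exact h.symm

lemma indicator_one_dotProduct [NonAssocSemiring R] (C : Finset n) (w : n → R) :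
    (C : Set n).indicator 1 ⬝ᵥ w = ∑ i ∈ C, w i := by
  classical
  simp [dotProduct, Set.indicator_apply, Finset.sum_ite_mem]

lemma mulVec_indicator_one_apply [CommSemiring R] (F : Matrix n n R) (C : Finset n) (i : n) :
    (F *ᵥ (C : Set n).indicator 1) i = ∑ j ∈ C, F i j := by
  rw [mulVec, dotProduct_comm, indicator_one_dotProduct]

lemma sub_smul_one_dotProduct_mulVec_sub_smul_one [CommRing R] (F : Matrix n n R) (u : n → R)
    {a s : R} (hrow : F *ᵥ 1 = s • 1) (hcol : 1 ᵥ* F = s • 1) :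
    (u - a • 1) ⬝ᵥ F *ᵥ (u - a • 1)
      = u ⬝ᵥ F *ᵥ u - 2 * a * s * (u ⬝ᵥ 1) + a ^ 2 * s * Fintype.card n := by
  simp only [mulVec_sub, mulVec_smul, hrow, sub_dotProduct, dotProduct_sub, smul_dotProduct,
    dotProduct_smul, dotProduct_mulVec 1 F, hcol, one_dotProduct_one, smul_eq_mul]
  rw [dotProduct_comm 1 u]
  ring

lemma sum_apply_eq_of_mulVec_indicator_one_sub_smul_one [CommRing R] (F : Matrix n n R)
    {C : Finset n} {k θ a : R} (hrow : F *ᵥ 1 = k • 1)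
    (hv : F *ᵥ ((C : Set n).indicator 1 - a • 1) = θ • ((C : Set n).indicator 1 - a • 1))
    {x : n} (hx : x ∉ C) :
    ∑ y ∈ C, F x y = a * (k - θ) := by
  have hvx := congrFun hv x
  rw [mulVec_sub, mulVec_smul, hrow, Pi.sub_apply, mulVec_indicator_one_apply] at hvx
  simp only [Pi.smul_apply, Pi.sub_apply, Set.indicator_of_notMem (mem_coe.not.2 hx),
    Pi.one_apply, smul_eq_mul, mul_one, zero_sub] at hvx
  linear_combination hvx

open scoped Matrix.Norms.L2Operator MatrixOrder

variable [DecidableEq n]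

lemma posSemidef_add_conjTranspose_sub_smul_one (M : Matrix n n ℂ) [IsStarNormal M] {θ : ℝ}
    (hle : ∀ z ∈ spectrum ℂ M, θ ≤ z.re) : (M + Mᴴ - (2 * θ : ℂ) • 1).PosSemidef := by
  rw [← nonneg_iff_posSemidef, ← star_eq_conjTranspose, ← Algebra.algebraMap_eq_smul_one]
  exact add_star_sub_nonneg M hle

lemma le_re_diag_of_forall_le_re (M : Matrix n n ℂ) [IsStarNormal M] {θ : ℝ}
    (hle : ∀ z ∈ spectrum ℂ M, θ ≤ z.re) (i : n) : θ ≤ (M i i).re := by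
  have hi := (posSemidef_add_conjTranspose_sub_smul_one M hle).diag_nonneg (i := i)
  simp only [sub_apply, add_apply, conjTranspose_apply, smul_apply, one_apply_eq, smul_eq_mul,
    mul_one, RCLike.star_def, Complex.add_conj] at hi
  rw [← Complex.ofReal_ofNat, ← Complex.ofReal_mul, ← Complex.ofReal_sub,
    Complex.zero_le_real] at hi
  linarith

lemma mulVec_eq_smul_of_star_dotProduct_mulVec_eq_zero (M : Matrix n n ℂ) [IsStarNormal M]
    {θ : ℝ} (hle : ∀ z ∈ spectrum ℂ M, θ ≤ z.re) (huniq : ∀ z ∈ spectrum ℂ M, z.re = θ → z = θ)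
    (w : n → ℂ) (hw : star w ⬝ᵥ (M + Mᴴ - (2 * θ : ℂ) • 1) *ᵥ w = 0) :
    M *ᵥ w = (θ : ℂ) • w := by
  have hker :=
    ((posSemidef_add_conjTranspose_sub_smul_one M hle).dotProduct_mulVec_zero_iff w).mp hw
  obtain ⟨b, hb⟩ := exists_mul_add_star_sub_eq M M.finite_spectrum huniq
  rw [star_eq_conjTranspose, Algebra.algebraMap_eq_smul_one, Algebra.algebraMap_eq_smul_one] at hb
  have hbw := congrArg (· *ᵥ w) hb
  simp only [← mulVec_mulVec, hker, mulVec_zero, sub_mulVec, smul_mulVec, one_mulVec] at hbw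
  exact sub_eq_zero.mp hbw.symm

lemma indicator_one_dotProduct_add_conjTranspose_sub_mulVec_indicator_one (M : Matrix n n ℂ)
    (θ : ℝ) {C : Finset n} (hC : ∀ x ∈ C, ∀ y ∈ C, M x y = 0) :
    (C : Set n).indicator 1 ⬝ᵥ (M + Mᴴ - (2 * θ : ℂ) • 1) *ᵥ (C : Set n).indicator 1
      = (-2 * θ * #C : ℂ) := by
  rw [indicator_one_dotProduct]
  simp_rw [mulVec_indicator_one_apply]
  calc ∑ i ∈ C, ∑ j ∈ C, (M + Mᴴ - (2 * θ : ℂ) • (1 : Matrix n n ℂ)) i j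
      = ∑ i ∈ C, ∑ j ∈ C, if i = j then -2 * (θ : ℂ) else 0 := by
        refine sum_congr rfl fun i hi => sum_congr rfl fun j hj => ?_
        rw [sub_apply, add_apply, conjTranspose_apply, hC i hi j hj, hC j hj i hi]
        by_cases hij : i = j <;> simp [hij]
    _ = (-2 * θ * #C : ℂ) := by simp [mul_comm]

lemma star_dotProduct_mulVec_indicator_one_sub_smul_one (M : Matrix n n ℂ) {k : ℝ} (θ a : ℝ)
    (hrow : M *ᵥ 1 = (k : ℂ) • 1) (hcol : 1 ᵥ* M = (k : ℂ) • 1) {C : Finset n}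
    (hC : ∀ x ∈ C, ∀ y ∈ C, M x y = 0) :
    star ((C : Set n).indicator (1 : n → ℂ) - (a : ℂ) • 1) ⬝ᵥ
        (M + Mᴴ - (2 * θ : ℂ) • 1) *ᵥ ((C : Set n).indicator (1 : n → ℂ) - (a : ℂ) • 1)
      = ((2 * (a ^ 2 * (k - θ) * Fintype.card n - 2 * a * (k - θ) * #C - θ * #C) : ℝ) : ℂ) := by
  have hstar : star ((C : Set n).indicator (1 : n → ℂ) - (a : ℂ) • 1)
      = (C : Set n).indicator (1 : n → ℂ) - (a : ℂ) • 1 := by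
    ext i
    simp [Set.indicator_apply]
  have hrowH : (M + Mᴴ - (2 * θ : ℂ) • 1) *ᵥ 1 = (2 * (k - θ) : ℂ) • (1 : n → ℂ) := by
    rw [sub_mulVec, add_mulVec, hrow, ← star_one, ← star_vecMul, star_one, hcol, smul_mulVec,
      one_mulVec]
    ext
    simp
    ring
  have hcolH : 1 ᵥ* (M + Mᴴ - (2 * θ : ℂ) • 1) = (2 * (k - θ) : ℂ) • (1 : n → ℂ) := by
    rw [vecMul_sub, vecMul_add, hcol, ← star_one, ← star_mulVec, star_one, hrow, vecMul_smul,
      vecMul_one]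
    ext
    simp
    ring
  rw [hstar, sub_smul_one_dotProduct_mulVec_sub_smul_one _ _ hrowH hcolH,
    indicator_one_dotProduct_add_conjTranspose_sub_mulVec_indicator_one M θ hC,
    indicator_one_dotProduct]
  simp
  ring

end Matrix

theorem hoffman_coclique_bound_equality_unique_general
    (N : ℕ) (k θmin : ℝ) (A : Matrix (Fin N) (Fin N) ℝ)
    (h01 : ∀ i j, A i j = 0 ∨ A i j = 1)
    (hdiag : ∀ i, A i i = 0)
    (hnormal : A * Aᵀ = Aᵀ * A)
    (hrow : ∀ i, ∑ j, A i j = k)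
    (hcol : ∀ i, ∑ j, A j i = k)
    (hmin_le : ∀ θ ∈ spectrum ℂ (A.map Complex.ofReal), θmin ≤ θ.re)
    (huniq : ∀ θ ∈ spectrum ℂ (A.map Complex.ofReal), θ.re = θmin → θ = (θmin : ℂ))
    (C : Finset (Fin N))
    (hC : ∀ x ∈ C, ∀ y ∈ C, A x y = 0)
    (heq : (C.card : ℝ) = (N : ℝ) * (-θmin) / (k - θmin)) :
    ∀ x ∉ C, ∑ y ∈ C, A x y = -θmin := by
  intro x hx
  set M := A.map Complex.ofReal
  have := isStarNormal_map_ofReal hnormal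
  have hθ : θmin ≤ 0 := by simpa [M, hdiag] using M.le_re_diag_of_forall_le_re hmin_le x
  have hk : 0 ≤ k := hrow x ▸ sum_nonneg fun j _ => by rcases h01 x j with h | h <;> simp [h]
  have hN : (0 : ℝ) < N := by exact_mod_cast x.pos
  -- if `k = θmin` then `heq` divides by zero; but then `k = θmin = 0`
  have ha : (#C / N : ℝ) * (k - θmin) = -θmin := by
    rcases (sub_nonneg.2 (hθ.trans hk)).eq_or_lt with h | h
    · rw [← h, mul_zero, show θmin = 0 by linarith, neg_zero]
    · rw [heq]
      field_simp
  have haN : (#C / N : ℝ) * N = #C := div_mul_cancel₀ _ hN.ne'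
  set a : ℝ := #C / N
  have hrowM := map_ofReal_mulVec_one hrow
  have hw := M.star_dotProduct_mulVec_indicator_one_sub_smul_one θmin a hrowM
    (one_vecMul_map_ofReal hcol) (C := C) (by simpa [M] using hC)
  rw [Fintype.card_fin, show 2 * (a ^ 2 * (k - θmin) * N - 2 * a * (k - θmin) * #C - θmin * #C) = 0
    by linear_combination 2 * ((a * N - 2 * #C) * ha - θmin * haN), Complex.ofReal_zero] at hw
  have hsum := M.sum_apply_eq_of_mulVec_indicator_one_sub_smul_one hrowM
    (M.mulVec_eq_smul_of_star_dotProduct_mulVec_eq_zero hmin_le huniq _ hw) hx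
  simp only [M, map_apply] at hsum
  rw [← ha]
  exact_mod_cast hsum

/-- Equality case of Hoffman's coclique bound when exactly one eigenvalue has
minimal real part: every vertex outside the coclique has exactly `-θmin`
out-neighbours in the coclique. -/
theorem hoffman_coclique_bound_equality_unique
    (N : ℕ) (k θmin : ℝ) (A : Matrix (Fin N) (Fin N) ℝ)
    (h01 : ∀ i j, A i j = 0 ∨ A i j = 1)
    (hdiag : ∀ i, A i i = 0)
    (hnormal : A * Aᵀ = Aᵀ * A)
    (hrow : ∀ i, ∑ j, A i j = k)
    (hcol : ∀ i, ∑ j, A j i = k)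
    (hconn : ∀ i j : Fin N, Relation.ReflTransGen (fun x y => A x y = 1) i j)
    (hedge : ∃ i j, A i j = 1)
    (hmin_mem : ∃ θ ∈ spectrum ℂ (A.map Complex.ofReal), θ.re = θmin)
    (hmin_le : ∀ θ ∈ spectrum ℂ (A.map Complex.ofReal), θmin ≤ θ.re)
    (huniq : ∀ θ ∈ spectrum ℂ (A.map Complex.ofReal), θ.re = θmin → θ = (θmin : ℂ))
    (C : Finset (Fin N))
    (hC : ∀ x ∈ C, ∀ y ∈ C, A x y = 0)
    (heq : (C.card : ℝ) = (N : ℝ) * (-θmin) / (k - θmin)) :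
    ∀ x ∉ C, ∑ y ∈ C, A x y = -θmin :=
  hoffman_coclique_bound_equality_unique_general N k θmin A h01 hdiag hnormal hrow hcol hmin_le
    huniq C hC heq
end

section
/- If H = (H_{ij}) is a skew-Bush-type Hadamard matrix of order 4n², then A = (J_{4n²} − H)/2 is the adjacency matrix of a doubly regular asymmetric digraph with parameters (4n², 2n²−n, n²−n) whose vertex set is partitioned into 2n disjoint cocliques of size 2n (the diagonal blocks). -/
open Matrix Finset

/-- From a skew-Bush-type Hadamard matrix `H` of order `4n²` (vertices indexed by
`Fin (2n) × Fin (2n)`), the matrix `A = (J - H)/2` is the adjacency matrix of a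
doubly regular asymmetric digraph with parameters `(4n², 2n²-n, n²-n)` whose
diagonal blocks are `2n` disjoint cocliques of size `2n`. -/
theorem skew_bush_hadamard_to_drad (n : ℕ) (hn : 0 < n)
    (H : Matrix (Fin (2 * n) × Fin (2 * n)) (Fin (2 * n) × Fin (2 * n)) ℝ)
    (hpm : ∀ x y, H x y = 1 ∨ H x y = -1)
    (hHad : H * Hᵀ = ((4 * n ^ 2 : ℝ)) • 1)
    (hdiagblk : ∀ (i : Fin (2 * n)) (a b : Fin (2 * n)), H (i, a) (i, b) = 1)
    (hrowsum : ∀ i j : Fin (2 * n), i ≠ j →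
      (∀ a, ∑ b, H (i, a) (j, b) = 0) ∧ (∀ b, ∑ a, H (i, a) (j, b) = 0))
    (hskew : ∀ x y : Fin (2 * n) × Fin (2 * n), x.1 ≠ y.1 → H x y = -H y x)
    (A : Matrix (Fin (2 * n) × Fin (2 * n)) (Fin (2 * n) × Fin (2 * n)) ℝ)
    (hA : A = Matrix.of fun x y => (1 - H x y) / 2) :
    (∀ x y, A x y = 0 ∨ A x y = 1) ∧
    (∀ x, A x x = 0) ∧
    (∀ x y, A x y + A y x = 0 ∨ A x y + A y x = 1) ∧
    (A * Aᵀ = ((2 * n ^ 2 - n : ℝ)) • 1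
      + ((n ^ 2 - n : ℝ)) • ((Matrix.of fun _ _ => (1 : ℝ)) - 1)) ∧
    (∀ (i : Fin (2 * n)) (a b : Fin (2 * n)), A (i, a) (i, b) = 0) := by
  have hdiag0 : ∀ (i : Fin (2 * n)) (a b : Fin (2 * n)), A (i, a) (i, b) = 0 := by
    intro i a b; simp [hA, hdiagblk]
  have hrow : ∀ x, ∑ z, H x z = 2 * n := by
    rintro ⟨i, a⟩
    rw [Fintype.sum_prod_type, Finset.sum_eq_single i]
    · simp [hdiagblk]
    · intro j _ hj; exact (hrowsum i j (Ne.symm hj)).1 a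
    · simp
  refine ⟨?_, ?_, ?_, ?_, hdiag0⟩
  · intro x y
    rcases hpm x y with h | h
    · left; simp [hA, h]
    · right; simp [hA, h]
  · rintro ⟨i, a⟩; exact hdiag0 i a a
  · intro x y
    by_cases h : x.1 = y.1
    · left
      obtain ⟨i, a⟩ := x; obtain ⟨j, b⟩ := y
      simp only at h; subst h
      simp [hA, hdiagblk]
    · right
      have hs := hskew x y h
      rw [hA]; simp only [Matrix.of_apply]; rw [hs]; ring
  · ext x y
    rw [Matrix.mul_apply]
    have hH : ∑ z, H x z * H y z = if x = y then (4 * n ^ 2 : ℝ) else 0 := by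
      have h := congrFun (congrFun hHad x) y
      rw [Matrix.mul_apply] at h
      simpa [Matrix.transpose_apply, Matrix.one_apply, mul_ite] using h
    simp only [hA, Matrix.of_apply, Matrix.transpose_apply]
    have expand : ∀ z : Fin (2 * n) × Fin (2 * n),
        (1 - H x z) / 2 * ((1 - H y z) / 2)
          = ((1 : ℝ) - H x z - H y z + H x z * H y z) / 4 := by
      intro z; ring
    rw [Finset.sum_congr rfl (fun z _ => expand z), ← Finset.sum_div]
    have hcard : (∑ _z : Fin (2 * n) × Fin (2 * n), (1 : ℝ)) = 4 * n ^ 2 := by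
      simp; push_cast; ring
    have hsplit : ∑ z, ((1 : ℝ) - H x z - H y z + H x z * H y z)
        = (∑ _z : Fin (2 * n) × Fin (2 * n), (1:ℝ)) - (∑ z, H x z) - (∑ z, H y z)
          + ∑ z, H x z * H y z := by
      rw [Finset.sum_add_distrib, Finset.sum_sub_distrib, Finset.sum_sub_distrib]
    rw [hsplit, hcard, hrow x, hrow y, hH]
    simp only [Matrix.add_apply, Matrix.smul_apply, Matrix.one_apply,
      Matrix.sub_apply, Matrix.of_apply, smul_eq_mul]
    by_cases hxy : x = y
    · simp [hxy]; ring
    · simp [hxy]; ring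
end

section
/- If there exists a doubly regular asymmetric digraph with parameters (4n², 2n²−n, n²−n) whose vertex set is partitioned into 2n disjoint cocliques of size 2n, then there exists a skew-Bush-type Hadamard matrix of order 4n². Concretely, after ordering the vertices so that A + I_{2n} ⊗ J_{2n} is a (0,1)-matrix, the matrix H = A − A^T + I_{2n} ⊗ J_{2n} is a skew-Bush-type Hadamard matrix. -/
/-!
Because `A + Aᵀ = J - I ⊗ J`, one has `Hᵀ = J - 2A`: so `H` is a `±1` matrix, `1` on the
diagonal blocks (where `A` vanishes) and `H + Hᵀ = 2 (I ⊗ J)`. As `A` is `0/1` with row sums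
`k = 2n² - n`, the design equation gives `HᵀH = (4n² - 4k + 4λ) J + 4(k - λ) I = 4n² I`.

For the block sums, `HHᵀ = 4n² I` and `H + Hᵀ = 2 (I ⊗ J)` give `H (I ⊗ J) Hᵀ = 4n² (I ⊗ J)`.
Writing `I ⊗ J = PPᵀ` with `P` the block indicator, the diagonal entries say that the vector of
block sums of a row of `H` has squared length `4n²`; its own diagonal block already contributes
`(2n)²`, so every other block sum vanishes. Column sums follow by applying this to `Hᵀ`.
-/

open Matrix Finset

section SumOfSquares

variable {ι R : Type*} [Fintype ι] [DecidableEq ι] [CommRing R] [LinearOrder R]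
  [IsStrictOrderedRing R]

theorem eq_zero_of_sum_sq_eq_sq {v : ι → R} {i j : ι} (h : ∑ k, v k ^ 2 = v i ^ 2)
    (hji : j ≠ i) : v j = 0 := by
  have hrest : ∑ k ∈ univ.erase i, v k ^ 2 = 0 := by
    have := add_sum_erase univ (fun k => v k ^ 2) (mem_univ i)
    linarith
  have hj := (sum_eq_zero_iff_of_nonneg fun k _ => sq_nonneg (v k)).mp hrest j
    (mem_erase.mpr ⟨hji, mem_univ j⟩)
  exact pow_eq_zero_iff two_ne_zero |>.mp hj

end SumOfSquares

section Algebra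

variable {ι R : Type*} [CommRing R]

theorem transpose_add_sub_transpose_add {A D J : Matrix ι ι R} (hD : Dᵀ = D)
    (h : A + Aᵀ = J - D) : (A - Aᵀ + D)ᵀ = J - (2 : R) • A := by
  rw [transpose_add, transpose_sub, transpose_transpose, hD, eq_sub_of_add_eq' h]
  module

variable [Fintype ι]

theorem mul_ones_eq_smul_of_zero_one {A : Matrix ι ι R} (h01 : ∀ x y, A x y = 0 ∨ A x y = 1)
    {k : R} (hk : ∀ x, (A * Aᵀ) x x = k) :
    A * of (fun _ _ => 1) = k • of (fun _ _ => 1) := by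
  ext x y
  have hidem : ∀ z, A x z * A x z = A x z := fun z => by rcases h01 x z with h | h <;> simp [h]
  simpa [mul_apply, hidem] using hk x

theorem ones_mul_ones : (of fun _ _ => 1 : Matrix ι ι R) * of (fun _ _ => 1) =
    (Fintype.card ι : R) • of (fun _ _ => 1) := by
  ext x y
  simp [mul_apply]

theorem ones_sub_two_smul_mul_transpose [DecidableEq ι] {A : Matrix ι ι R} {k l : R}
    (hA : A * Aᵀ = k • 1 + l • (of (fun _ _ => 1) - 1))
    (hrow : A * of (fun _ _ => 1) = k • of (fun _ _ => 1)) :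
    (of (fun _ _ => 1) - (2 : R) • A) * (of (fun _ _ => 1) - (2 : R) • A)ᵀ =
      ((Fintype.card ι : R) - 4 * k + 4 * l) • of (fun _ _ => 1) + (4 * (k - l)) • 1 := by
  have hcol : (of fun _ _ => 1 : Matrix ι ι R) * Aᵀ = k • of (fun _ _ => 1) := by
    ext x y
    simpa [mul_apply] using congrFun (congrFun hrow y) x
  simp only [transpose_sub, transpose_smul, sub_mul, mul_sub, Matrix.smul_mul, Matrix.mul_smul]
  rw [show (of fun _ _ => 1 : Matrix ι ι R)ᵀ = of fun _ _ => 1 from rfl, ones_mul_ones, hrow,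
    hcol, hA]
  match_scalars <;> ring

theorem mul_transpose_eq_smul_one_of_transpose_mul [DecidableEq ι] {K : Type*} [Field K]
    {M : Matrix ι ι K} {c : K} (hc : c ≠ 0) (h : Mᵀ * M = c • 1) : M * Mᵀ = c • 1 := by
  have hinv : M * (c⁻¹ • Mᵀ) = 1 :=
    mul_eq_one_comm.mp (by rw [smul_mul, h, smul_smul, inv_mul_cancel₀ hc, one_smul])
  rw [Matrix.mul_smul, inv_smul_eq_iff₀ hc] at hinv
  rw [hinv]

theorem mul_mul_transpose_eq_smul_of_add_transpose [DecidableEq ι] {K : Type*} [Field K]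
    [NeZero (2 : K)] {M D : Matrix ι ι K} {c : K} (h : M * Mᵀ = c • 1)
    (hD : M + Mᵀ = (2 : K) • D) : M * D * Mᵀ = c • D := by
  have h2 : M * (M + Mᵀ) * Mᵀ = c • (M + Mᵀ) := by
    rw [mul_add, add_mul, mul_assoc, h, Matrix.mul_smul, mul_one, Matrix.smul_mul, one_mul,
      smul_add]
  rw [hD, Matrix.mul_smul, Matrix.smul_mul, smul_comm] at h2
  exact smul_right_injective _ (NeZero.ne 2) h2

end Algebra

section Blocks

/-- `I_α ⊗ J_β` -/
def blockDiagOnes (α β : Type*) [DecidableEq α] : Matrix (α × β) (α × β) ℝ :=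
  of fun x y => if x.1 = y.1 then 1 else 0

def blockIndicator (α β : Type*) [DecidableEq α] : Matrix (α × β) α ℝ :=
  of fun x i => if x.1 = i then 1 else 0

variable {α β : Type*} [DecidableEq α]

theorem apply_eq_zero_of_fst_eq {A : Matrix (α × β) (α × β) ℝ}
    (h01 : ∀ x y, A x y = 0 ∨ A x y = 1)
    (hblocks : A + Aᵀ = of (fun _ _ => 1) - blockDiagOnes α β) {x y : α × β} (hxy : x.1 = y.1) :
    A x y = 0 := by
  have hzero := congrFun (congrFun hblocks x) y
  simp only [Matrix.add_apply, transpose_apply, Matrix.sub_apply, of_apply, blockDiagOnes,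
    if_pos hxy, sub_self] at hzero
  rcases h01 x y with h | h
  · exact h
  · rcases h01 y x with h' | h' <;> linarith

theorem apply_eq_neg_of_fst_ne {M : Matrix (α × β) (α × β) ℝ}
    (hsum : M + Mᵀ = (2 : ℝ) • blockDiagOnes α β) {x y : α × β} (hxy : x.1 ≠ y.1) :
    M x y = -M y x := by
  have := congrFun (congrFun hsum x) y
  simp only [Matrix.add_apply, transpose_apply, Matrix.smul_apply, blockDiagOnes, of_apply,
    if_neg hxy, smul_zero] at this
  linarith

variable [Fintype α]

theorem blockIndicator_mul_transpose :
    blockIndicator α β * (blockIndicator α β)ᵀ = blockDiagOnes α β := by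
  ext x y
  simp [blockIndicator, blockDiagOnes, mul_apply]

theorem blockDiagOnes_transpose : (blockDiagOnes α β)ᵀ = blockDiagOnes α β := by
  rw [← blockIndicator_mul_transpose, transpose_mul, transpose_transpose]

variable [Fintype β]

theorem mul_blockIndicator_apply {γ : Type*} (M : Matrix γ (α × β) ℝ) (x : γ) (i : α) :
    (M * blockIndicator α β) x i = ∑ b, M x (i, b) := by
  rw [mul_apply, Fintype.sum_prod_type]
  simp [blockIndicator, sum_ite_irrel]

theorem sum_block_row_eq_zero [DecidableEq β] {M : Matrix (α × β) (α × β) ℝ}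
    (hM : M * Mᵀ = ((Fintype.card β : ℝ) ^ 2) • 1) (hsum : M + Mᵀ = (2 : ℝ) • blockDiagOnes α β)
    (hblock : ∀ i a b, M (i, a) (i, b) = 1) {i j : α} (hji : j ≠ i) (a : β) :
    ∑ b, M (i, a) (j, b) = 0 := by
  have hgram : (M * blockIndicator α β) * (M * blockIndicator α β)ᵀ =
      ((Fintype.card β : ℝ) ^ 2) • blockDiagOnes α β := by
    rw [transpose_mul, Matrix.mul_assoc, ← Matrix.mul_assoc (blockIndicator α β),
      blockIndicator_mul_transpose, ← Matrix.mul_assoc,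
      mul_mul_transpose_eq_smul_of_add_transpose hM hsum]
  have hsq : ∑ k, (∑ b, M (i, a) (k, b)) ^ 2 = (∑ b, M (i, a) (i, b)) ^ 2 := by
    have := congrFun (congrFun hgram (i, a)) (i, a)
    rw [mul_apply] at this
    simp only [transpose_apply, mul_blockIndicator_apply, ← sq] at this
    simpa [blockDiagOnes, hblock] using this
  exact eq_zero_of_sum_sq_eq_sq (v := fun k => ∑ b, M (i, a) (k, b)) hsq hji

end Blocks

theorem drad_to_skew_bush_hadamard_general (n : ℕ) (hn : 0 < n)
    (A : Matrix (Fin (2 * n) × Fin (2 * n)) (Fin (2 * n) × Fin (2 * n)) ℝ)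
    (h01 : ∀ x y, A x y = 0 ∨ A x y = 1)
    (hblocks : A + Aᵀ = (Matrix.of fun _ _ => (1 : ℝ))
      - Matrix.of (fun x y : Fin (2 * n) × Fin (2 * n) => if x.1 = y.1 then (1 : ℝ) else 0))
    (hdesign : A * Aᵀ = ((2 * n ^ 2 - n : ℝ)) • 1
      + ((n ^ 2 - n : ℝ)) • ((Matrix.of fun _ _ => (1 : ℝ)) - 1))
    (H : Matrix (Fin (2 * n) × Fin (2 * n)) (Fin (2 * n) × Fin (2 * n)) ℝ)
    (hH : H = A - Aᵀ
      + Matrix.of (fun x y : Fin (2 * n) × Fin (2 * n) => if x.1 = y.1 then (1 : ℝ) else 0)) :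
    (∀ x y, H x y = 1 ∨ H x y = -1) ∧
    (H * Hᵀ = ((4 * n ^ 2 : ℝ)) • 1) ∧
    (∀ (i : Fin (2 * n)) (a b : Fin (2 * n)), H (i, a) (i, b) = 1) ∧
    (∀ i j : Fin (2 * n), i ≠ j →
      (∀ a, ∑ b, H (i, a) (j, b) = 0) ∧ (∀ b, ∑ a, H (i, a) (j, b) = 0)) ∧
    (∀ x y : Fin (2 * n) × Fin (2 * n), x.1 ≠ y.1 → H x y = -H y x) := by
  set B := blockDiagOnes (Fin (2 * n)) (Fin (2 * n))
  change A + Aᵀ = _ - B at hblocks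
  change H = A - Aᵀ + B at hH
  have hHt : Hᵀ = of (fun _ _ => 1) - (2 : ℝ) • A := by
    rw [hH]; exact transpose_add_sub_transpose_add blockDiagOnes_transpose hblocks
  have hentry (x y) : H x y = 1 - 2 * A y x := by simpa using congrFun (congrFun hHt y) x
  have hsum : H + Hᵀ = (2 : ℝ) • B := by
    rw [hH, transpose_add, transpose_sub, transpose_transpose, blockDiagOnes_transpose]; module
  have hHtH : Hᵀ * H = (4 * n ^ 2 : ℝ) • 1 := by
    have hrow := mul_ones_eq_smul_of_zero_one h01 (k := 2 * n ^ 2 - n) fun x => by simp [hdesign]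
    calc Hᵀ * H = (of (fun _ _ => 1) - (2 : ℝ) • A) * (of (fun _ _ => 1) - (2 : ℝ) • A)ᵀ := by
          rw [← hHt, transpose_transpose]
      _ = _ := by
          rw [ones_sub_two_smul_mul_transpose hdesign hrow]
          simp only [Fintype.card_prod, Fintype.card_fin]
          match_scalars <;> ring
  have hHHt := mul_transpose_eq_smul_one_of_transpose_mul (by positivity) hHtH
  have hblock (i : Fin (2 * n)) (a b) : H (i, a) (i, b) = 1 := by
    rw [hentry, apply_eq_zero_of_fst_eq (x := (i, b)) (y := (i, a)) h01 hblocks rfl]; norm_num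
  have hcard : ((Fintype.card (Fin (2 * n)) : ℝ)) ^ 2 = 4 * n ^ 2 := by simp; ring
  refine ⟨fun x y => ?_, hHHt, hblock, fun i j hij => ⟨fun a => ?_, fun b => ?_⟩,
    fun x y => apply_eq_neg_of_fst_ne hsum⟩
  · rcases h01 y x with h | h <;> norm_num [hentry, h]
  · exact sum_block_row_eq_zero (by rwa [hcard]) hsum hblock hij.symm a
  · exact sum_block_row_eq_zero (M := Hᵀ) (by rwa [transpose_transpose, hcard])
      (by rwa [transpose_transpose, add_comm]) (fun i a b => hblock i b a) hij b

/-- From a doubly regular asymmetric digraph with parameters `(4n², 2n²-n, n²-n)`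
ordered so that `A + Aᵀ = J - I_{2n} ⊗ J_{2n}`, the matrix
`H = A - Aᵀ + I_{2n} ⊗ J_{2n}` is a skew-Bush-type Hadamard matrix of order `4n²`. -/
theorem drad_to_skew_bush_hadamard (n : ℕ) (hn : 0 < n)
    (A : Matrix (Fin (2 * n) × Fin (2 * n)) (Fin (2 * n) × Fin (2 * n)) ℝ)
    (h01 : ∀ x y, A x y = 0 ∨ A x y = 1)
    (hdiag : ∀ x, A x x = 0)
    (hblocks : A + Aᵀ = (Matrix.of fun _ _ => (1 : ℝ))
      - Matrix.of (fun x y : Fin (2 * n) × Fin (2 * n) => if x.1 = y.1 then (1 : ℝ) else 0))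
    (hdesign : A * Aᵀ = ((2 * n ^ 2 - n : ℝ)) • 1
      + ((n ^ 2 - n : ℝ)) • ((Matrix.of fun _ _ => (1 : ℝ)) - 1))
    (H : Matrix (Fin (2 * n) × Fin (2 * n)) (Fin (2 * n) × Fin (2 * n)) ℝ)
    (hH : H = A - Aᵀ
      + Matrix.of (fun x y : Fin (2 * n) × Fin (2 * n) => if x.1 = y.1 then (1 : ℝ) else 0)) :
    (∀ x y, H x y = 1 ∨ H x y = -1) ∧
    (H * Hᵀ = ((4 * n ^ 2 : ℝ)) • 1) ∧
    (∀ (i : Fin (2 * n)) (a b : Fin (2 * n)), H (i, a) (i, b) = 1) ∧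
    (∀ i j : Fin (2 * n), i ≠ j →
      (∀ a, ∑ b, H (i, a) (j, b) = 0) ∧ (∀ b, ∑ a, H (i, a) (j, b) = 0)) ∧
    (∀ x y : Fin (2 * n) × Fin (2 * n), x.1 ≠ y.1 → H x y = -H y x) :=
  drad_to_skew_bush_hadamard_general n hn A h01 hblocks hdesign H hH
end

section
/- There exists a skew-Bush-type Hadamard matrix of order 4n² if and only if there exists a doubly regular asymmetric digraph with parameters (4n², 2n²−n, n²−n) whose vertex set can be decomposed into 2n disjoint cocliques of size 2n. -/
/-!
The two objects correspond through `H = J - 2A`. Since `A` has constant row sums `k`,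
`(J - 2A)(J - 2A)ᵀ = (4n² - 4k) J + 4 A Aᵀ`, so for `k = 2n² - n` the Hadamard condition
`H Hᵀ = 4n² I` is equivalent to `A Aᵀ = n² I + (n² - n) J`; the diagonal blocks `J` of `H` are
the cocliques of `A`. For the converse, `A` has `4n² k` arcs, exactly the number of pairs of
vertices in distinct cocliques, so each such pair carries one arc and `H - I ⊗ J` is
skew-symmetric. The block sums of `H` then vanish because `‖Hᵀ 1_S‖² = 4n² · 2n` is already
attained by the columns inside a block `S`.
-/

open Matrix Finset

theorem Finset.card_filter_fst_eq {κ κ' : Type*} [Fintype κ] [Fintype κ'] [DecidableEq κ] (c : κ) :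
    #{x : κ × κ' | x.1 = c} = Fintype.card κ' := by
  rw [show ({x : κ × κ' | x.1 = c} : Finset _) = {c} ×ˢ univ by ext ⟨i, a⟩; simp [eq_comm]]
  simp

theorem Equiv.exists_of_card_fiber_eq {α β γ : Type*} [Fintype α] [Fintype β] [DecidableEq γ]
    {f : α → γ} {g : β → γ} (h : ∀ c, #{a | f a = c} = #{b | g b = c}) :
    ∃ e : α ≃ β, ∀ a, g (e a) = f a := by
  classical
  have hfib (c : γ) : Fintype.card {a // f a = c} = Fintype.card {b // g b = c} := by
    simpa only [Fintype.card_subtype] using h c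
  exact ⟨Equiv.ofFiberEquiv fun c => Fintype.equivOfCardEq (hfib c), Equiv.ofFiberEquiv_map _⟩

theorem sum_one_sub_two_mul_mul {ι : Type*} [Fintype ι] (f g : ι → ℝ) :
    ∑ z, (1 - 2 * f z) * (1 - 2 * g z)
      = Fintype.card ι - 2 * ∑ z, f z - 2 * ∑ z, g z + 4 * ∑ z, f z * g z := by
  have h z : (1 - 2 * f z) * (1 - 2 * g z) = 1 - 2 * f z - 2 * g z + 4 * (f z * g z) := by ring
  simp only [h, sum_add_distrib, sum_sub_distrib, ← mul_sum, sum_const, card_univ, nsmul_eq_mul,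
    mul_one]

/-- The squared column sums over `S` add up to `‖Hᵀ 1_S‖² = s³`, and the columns in `S` alone
already contribute `s · s²`. -/
theorem Matrix.sum_apply_eq_zero_of_mul_transpose_eq {ι : Type*} [Fintype ι] [DecidableEq ι]
    {H : Matrix ι ι ℝ} {S : Finset ι} (hH : H * Hᵀ = ((#S : ℝ) ^ 2) • 1)
    (hS : ∀ y ∈ S, ∀ z ∈ S, H y z = 1) {z : ι} (hz : z ∉ S) : ∑ y ∈ S, H y z = 0 := by
  set f : ι → ℝ := fun z => ∑ y ∈ S, H y z
  have htotal : ∑ z, f z ^ 2 = (#S : ℝ) ^ 3 := by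
    calc ∑ z, f z ^ 2 = ∑ y ∈ S, ∑ w ∈ S, (H * Hᵀ) y w := by
          simp only [f, sq, sum_mul_sum, mul_apply, transpose_apply]
          rw [sum_comm]
          exact sum_congr rfl fun y _ => sum_comm
      _ = (#S : ℝ) ^ 3 := by
          simp [hH, one_apply]
          ring
  have hon : ∑ z ∈ S, f z ^ 2 = (#S : ℝ) ^ 3 := by
    have hcol : ∀ z ∈ S, f z = #S := fun z hz => by
      simp [f, sum_congr rfl fun y hy => hS y hy z hz]
    rw [sum_congr rfl fun z hz => by rw [hcol z hz]]
    simp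
    ring
  have hoff : ∑ z ∈ Sᶜ, f z ^ 2 = 0 := by
    linarith [sum_add_sum_compl S fun z => f z ^ 2]
  exact pow_eq_zero_iff two_ne_zero |>.mp <|
    (sum_eq_zero_iff_of_nonneg fun z _ => sq_nonneg (f z)).mp hoff z (mem_compl.mpr hz)

def IsDoublyRegularAsymmetric {ι : Type*} [Fintype ι] [DecidableEq ι] (k l : ℝ)
    (A : Matrix ι ι ℝ) : Prop :=
  (∀ x y, A x y = 0 ∨ A x y = 1) ∧ (∀ x, A x x = 0) ∧
    (∀ x y, A x y + A y x = 0 ∨ A x y + A y x = 1) ∧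
    A * Aᵀ = k • 1 + l • ((Matrix.of fun _ _ => (1 : ℝ)) - 1)

namespace IsDoublyRegularAsymmetric

variable {ι : Type*} [Fintype ι] [DecidableEq ι] {k l : ℝ} {A : Matrix ι ι ℝ}

theorem sum_mul_apply (hA : IsDoublyRegularAsymmetric k l A) (x y : ι) :
    ∑ z, A x z * A y z = if x = y then k else l := by
  have h := congrFun (congrFun hA.2.2.2 x) y
  simp only [mul_apply, transpose_apply] at h
  rw [h]
  split_ifs with hxy <;> simp [one_apply, hxy]

theorem sum_apply (hA : IsDoublyRegularAsymmetric k l A) (x : ι) : ∑ z, A x z = k :=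
  calc ∑ z, A x z = ∑ z, A x z * A x z :=
        sum_congr rfl fun z _ => by rcases hA.1 x z with h | h <;> simp [h]
    _ = k := by rw [hA.sum_mul_apply, if_pos rfl]

theorem submatrix {ι' : Type*} [Fintype ι'] [DecidableEq ι'] (hA : IsDoublyRegularAsymmetric k l A)
    (e : ι' ≃ ι) : IsDoublyRegularAsymmetric k l (A.submatrix e e) := by
  obtain ⟨h01, hdiag, hasym, hAA⟩ := hA
  refine ⟨fun x y => h01 _ _, fun x => hdiag _, fun x y => hasym _ _, ?_⟩
  rw [transpose_submatrix, submatrix_mul_equiv, hAA]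
  ext x y
  simp [one_apply]

/-- Counting arcs: `A` has `k |ι|` of them, which is exactly the number of unordered pairs of
vertices in distinct cocliques, and each such pair carries at most one arc. -/
theorem add_apply_eq_one {β : Type*} [DecidableEq β] (hA : IsDoublyRegularAsymmetric k l A)
    {p : ι → β} {s : ℕ} (hco : ∀ x y, p x = p y → A x y = 0) (hp : ∀ c, #{y | p y = c} = s)
    (hk : 2 * k = Fintype.card ι - s) {x y : ι} (hxy : p x ≠ p y) : A x y + A y x = 1 := by
  set F : ι → ι → ℝ := fun x y => (if p x = p y then 0 else 1) - A x y - A y x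
  have hF : ∀ x y, 0 ≤ F x y := by
    intro x y
    by_cases h : p x = p y
    · simp [F, h, hco x y h, hco y x h.symm]
    · rcases hA.2.2.1 x y with h' | h' <;> simp [F, h] <;> linarith
  have hcross : ∀ x, ∑ y, (if p x = p y then (0 : ℝ) else 1) = Fintype.card ι - s := by
    intro x
    have h y : (if p x = p y then (0 : ℝ) else 1) = 1 - if p y = p x then 1 else 0 := by
      by_cases hy : p x = p y <;> simp [hy, Ne.symm]
    simp only [h, sum_sub_distrib, sum_boole, hp, sum_const, card_univ, nsmul_eq_mul, mul_one]
  have hsum : ∑ x, ∑ y, F x y = 0 := by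
    simp only [F, sum_sub_distrib, hcross, hA.sum_apply]
    rw [sum_comm]
    simp only [hA.sum_apply, sum_const, card_univ, nsmul_eq_mul]
    linear_combination -(Fintype.card ι : ℝ) * hk
  have hrow := (sum_eq_zero_iff_of_nonneg fun x _ => sum_nonneg fun y _ => hF x y).mp hsum x
    (mem_univ x)
  have hFxy := (sum_eq_zero_iff_of_nonneg fun y _ => hF x y).mp hrow y (mem_univ y)
  simp only [F, if_neg hxy] at hFxy
  linarith

end IsDoublyRegularAsymmetric

def IsSkewBushHadamard {κ : Type*} [Fintype κ] [DecidableEq κ] (n : ℕ)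
    (H : Matrix (κ × κ) (κ × κ) ℝ) : Prop :=
  (∀ x y, H x y = 1 ∨ H x y = -1) ∧
    H * Hᵀ = (4 * n ^ 2 : ℝ) • 1 ∧
    (∀ i a b, H (i, a) (i, b) = 1) ∧
    (∀ i j, i ≠ j → (∀ a, ∑ b, H (i, a) (j, b) = 0) ∧ (∀ b, ∑ a, H (i, a) (j, b) = 0)) ∧
    (∀ x y : κ × κ, x.1 ≠ y.1 → H x y = -H y x)

namespace IsSkewBushHadamard

variable {κ : Type*} [Fintype κ] [DecidableEq κ] {n : ℕ} {H : Matrix (κ × κ) (κ × κ) ℝ}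

theorem apply_of_fst_eq (hH : IsSkewBushHadamard n H) {x y : κ × κ} (hxy : x.1 = y.1) :
    H x y = 1 := by
  obtain ⟨i, a⟩ := x
  obtain ⟨j, b⟩ := y
  obtain rfl : i = j := hxy
  exact hH.2.2.1 i a b

theorem sum_apply (hκ : Fintype.card κ = 2 * n) (hH : IsSkewBushHadamard n H) (x : κ × κ) :
    ∑ z, H x z = 2 * n := by
  obtain ⟨-, -, hblock, hsum, -⟩ := hH
  rw [Fintype.sum_prod_type, sum_eq_single x.1 fun j _ hj => (hsum x.1 j hj.symm).1 x.2]
  · simp [hblock, hκ]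
  · simp

theorem isDoublyRegularAsymmetric (hκ : Fintype.card κ = 2 * n) (hH : IsSkewBushHadamard n H) :
    IsDoublyRegularAsymmetric (2 * n ^ 2 - n) (n ^ 2 - n) (of fun x y => (1 - H x y) / 2) := by
  obtain ⟨hpm, hHH, -, -, hskew⟩ := id hH
  refine ⟨fun x y => ?_, fun x => by simp [hH.apply_of_fst_eq rfl], fun x y => ?_, ?_⟩
  · rcases hpm x y with h | h <;> simp [h]
  · by_cases h : x.1 = y.1
    · simp [hH.apply_of_fst_eq h, hH.apply_of_fst_eq h.symm]
    · right
      simp only [of_apply, hskew x y h]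
      ring
  · set A : Matrix (κ × κ) (κ × κ) ℝ := of fun x y => (1 - H x y) / 2
    have hH_eq (x z : κ × κ) : H x z = 1 - 2 * A x z := by simp only [A, of_apply]; ring
    have hrow (x : κ × κ) : ∑ z, A x z = 2 * n ^ 2 - n := by
      simp only [A, of_apply, ← sum_div, sum_sub_distrib, hH.sum_apply hκ, sum_const, card_univ,
        Fintype.card_prod, hκ]
      ring
    ext x y
    have hgram := sum_one_sub_two_mul_mul (A x) (A y)
    simp only [← hH_eq, hrow, Fintype.card_prod, hκ] at hgram
    have hHxy := congrFun (congrFun hHH x) y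
    simp only [mul_apply, transpose_apply, Matrix.smul_apply, one_apply, smul_eq_mul] at hHxy ⊢
    simp only [Matrix.add_apply, Matrix.smul_apply, Matrix.sub_apply, one_apply, of_apply,
      smul_eq_mul]
    split_ifs at hHxy ⊢ <;> push_cast at hgram <;> linear_combination hHxy / 4 - hgram / 4

end IsSkewBushHadamard

theorem IsDoublyRegularAsymmetric.isSkewBushHadamard {κ : Type*} [Fintype κ] [DecidableEq κ]
    {n : ℕ} {M : Matrix (κ × κ) (κ × κ) ℝ}
    (hM : IsDoublyRegularAsymmetric (2 * n ^ 2 - n) (n ^ 2 - n) M)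
    (hκ : Fintype.card κ = 2 * n) (hco : ∀ x y : κ × κ, x.1 = y.1 → M x y = 0) :
    IsSkewBushHadamard n (of fun x y => 1 - 2 * M x y) := by
  set H : Matrix (κ × κ) (κ × κ) ℝ := of fun x y => 1 - 2 * M x y
  have htournament : ∀ x y : κ × κ, x.1 ≠ y.1 → M x y + M y x = 1 := fun x y =>
    hM.add_apply_eq_one hco card_filter_fst_eq (by push_cast [Fintype.card_prod, hκ]; ring)
  have hskew : ∀ x y : κ × κ, x.1 ≠ y.1 → H x y = -H y x := fun x y hxy => by
    simp only [H, of_apply]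
    linear_combination -2 * htournament x y hxy
  have hblock : ∀ i a b, H (i, a) (i, b) = 1 := fun i a b => by simp [H, hco]
  have hHH : H * Hᵀ = (4 * n ^ 2 : ℝ) • 1 := by
    ext x y
    simp only [H, mul_apply, transpose_apply, of_apply, sum_one_sub_two_mul_mul, hM.sum_apply,
      hM.sum_mul_apply, Matrix.smul_apply, one_apply, smul_eq_mul, Fintype.card_prod, hκ]
    split_ifs <;> push_cast <;> ring
  have hcol : ∀ i j, i ≠ j → ∀ b, ∑ a, H (i, a) (j, b) = 0 := by
    intro i j hij b
    have hS : H * Hᵀ = ((#(({i} : Finset κ) ×ˢ (univ : Finset κ)) : ℝ) ^ 2) • 1 := by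
      rw [hHH, card_product, card_singleton, one_mul, card_univ, hκ]
      congr 1
      push_cast
      ring
    simpa [sum_product] using
      sum_apply_eq_zero_of_mul_transpose_eq hS (by simp [hblock]) (z := (j, b)) (by simpa using hij)
  refine ⟨fun x y => ?_, hHH, hblock, fun i j hij => ⟨fun a => ?_, hcol i j hij⟩, hskew⟩
  · rcases hM.1 x y with h | h <;> norm_num [H, h]
  · calc ∑ b, H (i, a) (j, b) = -∑ b, H (j, b) (i, a) := by
          rw [← sum_neg_distrib]
          exact sum_congr rfl fun b _ => hskew _ _ hij
      _ = 0 := by rw [hcol j i hij.symm a, neg_zero]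

theorem skew_bush_hadamard_iff_drad_general (n : ℕ) :
    (∃ H : Matrix (Fin (2 * n) × Fin (2 * n)) (Fin (2 * n) × Fin (2 * n)) ℝ,
      (∀ x y, H x y = 1 ∨ H x y = -1) ∧
      (H * Hᵀ = ((4 * n ^ 2 : ℝ)) • 1) ∧
      (∀ (i : Fin (2 * n)) (a b : Fin (2 * n)), H (i, a) (i, b) = 1) ∧
      (∀ i j : Fin (2 * n), i ≠ j →
        (∀ a, ∑ b, H (i, a) (j, b) = 0) ∧ (∀ b, ∑ a, H (i, a) (j, b) = 0)) ∧
      (∀ x y : Fin (2 * n) × Fin (2 * n), x.1 ≠ y.1 → H x y = -H y x)) ↔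
    (∃ A : Matrix (Fin (2 * n) × Fin (2 * n)) (Fin (2 * n) × Fin (2 * n)) ℝ,
      (∀ x y, A x y = 0 ∨ A x y = 1) ∧
      (∀ x, A x x = 0) ∧
      (∀ x y, A x y + A y x = 0 ∨ A x y + A y x = 1) ∧
      (A * Aᵀ = ((2 * n ^ 2 - n : ℝ)) • 1
        + ((n ^ 2 - n : ℝ)) • ((Matrix.of fun _ _ => (1 : ℝ)) - 1)) ∧
      (∃ part : Fin (2 * n) × Fin (2 * n) → Fin (2 * n),
        (∀ c, (Finset.univ.filter (fun x => part x = c)).card = 2 * n) ∧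
        (∀ x y, part x = part y → A x y = 0))) := by
  have hcard : Fintype.card (Fin (2 * n)) = 2 * n := Fintype.card_fin _
  constructor
  · rintro ⟨H, hH⟩
    obtain ⟨h01, hdiag, hasym, hAA⟩ := IsSkewBushHadamard.isDoublyRegularAsymmetric hcard hH
    refine ⟨_, h01, hdiag, hasym, hAA, Prod.fst, fun c => by rw [card_filter_fst_eq, hcard],
      fun x y hxy => ?_⟩
    simp [IsSkewBushHadamard.apply_of_fst_eq hH hxy]
  · rintro ⟨A, h01, hdiag, hasym, hAA, part, hpart, hco⟩
    have hA : IsDoublyRegularAsymmetric _ _ A := ⟨h01, hdiag, hasym, hAA⟩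
    obtain ⟨e, he⟩ := Equiv.exists_of_card_fiber_eq (g := part)
      (f := @Prod.fst (Fin (2 * n)) (Fin (2 * n))) fun c => by
        rw [card_filter_fst_eq, hpart, hcard]
    exact ⟨_, (hA.submatrix e).isSkewBushHadamard hcard fun x y hxy =>
      hco _ _ (by rw [he, he, hxy])⟩

/-- There exists a skew-Bush-type Hadamard matrix of order `4n²` if and only if
there exists a doubly regular asymmetric digraph with parameters
`(4n², 2n²-n, n²-n)` whose vertex set decomposes into `2n` disjoint cocliques of
size `2n`. Vertices are indexed by `Fin (2n) × Fin (2n)`. -/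
theorem skew_bush_hadamard_iff_drad (n : ℕ) (hn : 0 < n) :
    (∃ H : Matrix (Fin (2 * n) × Fin (2 * n)) (Fin (2 * n) × Fin (2 * n)) ℝ,
      (∀ x y, H x y = 1 ∨ H x y = -1) ∧
      (H * Hᵀ = ((4 * n ^ 2 : ℝ)) • 1) ∧
      (∀ (i : Fin (2 * n)) (a b : Fin (2 * n)), H (i, a) (i, b) = 1) ∧
      (∀ i j : Fin (2 * n), i ≠ j →
        (∀ a, ∑ b, H (i, a) (j, b) = 0) ∧ (∀ b, ∑ a, H (i, a) (j, b) = 0)) ∧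
      (∀ x y : Fin (2 * n) × Fin (2 * n), x.1 ≠ y.1 → H x y = -H y x)) ↔
    (∃ A : Matrix (Fin (2 * n) × Fin (2 * n)) (Fin (2 * n) × Fin (2 * n)) ℝ,
      (∀ x y, A x y = 0 ∨ A x y = 1) ∧
      (∀ x, A x x = 0) ∧
      (∀ x y, A x y + A y x = 0 ∨ A x y + A y x = 1) ∧
      (A * Aᵀ = ((2 * n ^ 2 - n : ℝ)) • 1
        + ((n ^ 2 - n : ℝ)) • ((Matrix.of fun _ _ => (1 : ℝ)) - 1)) ∧
      (∃ part : Fin (2 * n) × Fin (2 * n) → Fin (2 * n),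
        (∀ c, (Finset.univ.filter (fun x => part x = c)).card = 2 * n) ∧
        (∀ x y, part x = part y → A x y = 0))) :=
  skew_bush_hadamard_iff_drad_general n
end

section
/- Suppose there exists a Hadamard matrix of order n. Let C_2,…,C_n be the rank-one symmetric (1,−1)-matrices from a normalized Hadamard matrix (C_i = h_i^T h_i), and let L = (l(i,j)) be the addition table of Z_{n−1}, viewed as a symmetric Latin square on symbols {2,…,n}. Then the (n−1)(n−1)-block matrix M with (i,j) block C_{l(i,j)} is a symmetric (1,−1)-matrix of order n(n−1) satisfying MM^T = n(n−1)I_{n(n−1)} − nI_{n−1} ⊗ (J_n − I_n). -/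
open Matrix Finset

/-- The symmetric regular biangular matrix construction: given the outer-product
matrices `C_i` of a normalized Hadamard matrix of order `n` and the addition table
of `ℤ_{n-1}` (realized by `Fin (n-1)` with its modular addition, with symbols
embedded into `{2,…,n}` via an injection `e` avoiding the index of `C_1`), the
block matrix `M` with `(i,j)` block `C_{e(i+j)}` is a symmetric `(1,-1)`-matrix of
order `n(n-1)` with `M Mᵀ = n(n-1) I - n (I_{n-1} ⊗ (J_n - I_n))`. -/
theorem symmetric_biangular_construction (n : ℕ) (hn : 2 ≤ n)
    (C : Fin n → Matrix (Fin n) (Fin n) ℝ)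
    (hsymm : ∀ i, (C i)ᵀ = C i)
    (hpm : ∀ i a b, C i a b = 1 ∨ C i a b = -1)
    (hC1 : C ⟨0, by omega⟩ = (Matrix.of fun _ _ => (1 : ℝ)))
    (horth : ∀ i j, i ≠ j → C i * C j = 0)
    (hsq : ∀ i, C i * C i = (n : ℝ) • C i)
    (hsum : (∑ i, C i) = (n : ℝ) • 1)
    (e : Fin (n - 1) → Fin n)
    (he : Function.Injective e)
    (he0 : ∀ a, e a ≠ ⟨0, by omega⟩)
    (M : Matrix (Fin (n - 1) × Fin n) (Fin (n - 1) × Fin n) ℝ)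
    (hM : ∀ (i j : Fin (n - 1)) (a b : Fin n), M (i, a) (j, b) = C (e (i + j)) a b) :
    Mᵀ = M ∧
    (∀ x y, M x y = 1 ∨ M x y = -1) ∧
    M * Mᵀ = ((n : ℝ) * ((n : ℝ) - 1)) • 1
      - (n : ℝ) • Matrix.of (fun x y : Fin (n - 1) × Fin n =>
          if x.1 = y.1 ∧ x.2 ≠ y.2 then (1 : ℝ) else 0) := by
  haveI : NeZero (n - 1) := ⟨by omega⟩
  have hCsymm : ∀ i a b, C i a b = C i b a := by
    intro i a b
    conv_lhs => rw [← hsymm i]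
    rfl
  refine ⟨?_, ?_, ?_⟩
  · ext ⟨i, a⟩ ⟨j, b⟩
    rw [transpose_apply, hM, hM, add_comm j i, hCsymm]
  · rintro ⟨i, a⟩ ⟨j, b⟩
    rw [hM]; exact hpm _ _ _
  · have himg : (univ.image e) = univ.erase ⟨0, by omega⟩ := by
      apply Finset.eq_of_subset_of_card_le
      · intro x hx
        simp only [mem_image] at hx
        obtain ⟨a, _, rfl⟩ := hx
        exact Finset.mem_erase.mpr ⟨he0 a, mem_univ _⟩
      · rw [Finset.card_erase_of_mem (mem_univ _),
          Finset.card_image_of_injective _ he]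
        simp
    have hsumE : (∑ m : Fin (n-1), C (e m)) = (n:ℝ) • 1 - Matrix.of (fun _ _ => (1:ℝ)) := by
      rw [← Finset.sum_image (fun a _ b _ h => he h), himg,
        Finset.sum_erase_eq_sub (mem_univ _), hsum, hC1]
    ext ⟨i, a⟩ ⟨j, b⟩
    have lhs : (M * Mᵀ) (i,a) (j,b)
        = ∑ k : Fin (n-1), (C (e (i+k)) * C (e (j+k))) a b := by
      rw [Matrix.mul_apply, Fintype.sum_prod_type]
      refine Finset.sum_congr rfl fun k _ => ?_
      rw [Matrix.mul_apply]
      refine Finset.sum_congr rfl fun c _ => ?_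
      rw [transpose_apply, hM, hM, hCsymm (e (j+k)) c b]
    rw [lhs]
    simp only [Matrix.sub_apply, Matrix.smul_apply, Matrix.one_apply, Matrix.of_apply,
      Prod.mk.injEq, smul_eq_mul]
    by_cases hij : i = j
    · subst hij
      have step : ∀ k : Fin (n-1), (C (e (i+k)) * C (e (i+k))) a b
          = (n:ℝ) * C (e (i+k)) a b := by
        intro k; rw [hsq]; simp
      rw [Finset.sum_congr rfl (fun k _ => step k), ← Finset.mul_sum]
      have reidx : ∑ k : Fin (n-1), C (e (i+k)) a b = ∑ m : Fin (n-1), C (e m) a b :=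
        Fintype.sum_bijective (fun k => i + k) (Equiv.addLeft i).bijective _ _ (fun k => rfl)
      have happ : ∑ m : Fin (n-1), C (e m) a b = (n:ℝ) * (if a = b then 1 else 0) - 1 := by
        have h2 : (∑ m : Fin (n-1), C (e m)) a b = (n:ℝ) * (if a = b then 1 else 0) - 1 := by
          rw [hsumE, Matrix.sub_apply, Matrix.smul_apply, Matrix.one_apply, Matrix.of_apply,
            smul_eq_mul]
        rw [← h2, Matrix.sum_apply]
      rw [reidx, happ]
      by_cases hab : a = b
      · subst hab; norm_num
      · norm_num [hab]
    · have z : ∀ k : Fin (n-1), (C (e (i+k)) * C (e (j+k))) a b = 0 := by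
        intro k
        rw [horth _ _ (fun h => hij (by
          have := he h; exact add_right_cancel this))]
        simp
      rw [Finset.sum_congr rfl (fun k _ => z k), Finset.sum_const, smul_zero]
      simp [hij]
end

section
/- Let A be the adjacency matrix of a doubly regular asymmetric digraph with parameters (4n², 2n²−n, n²−n) satisfying A + A^T = J_{4n²} − I_{2n} ⊗ J_{2n}. Then the eigenvalues of A are 2n²−n, ±n√(−1), and −n. -/
open Matrix Finset

/-- The eigenvalues of the adjacency matrix of a doubly regular asymmetric digraph
with parameters `(4n², 2n²-n, n²-n)` satisfying `A + Aᵀ = J - I_{2n} ⊗ J_{2n}`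
are `2n²-n`, `±n√(-1)` and `-n`. -/
theorem drad_eigenvalues (n : ℕ) (hn : 0 < n)
    (A : Matrix (Fin (2 * n) × Fin (2 * n)) (Fin (2 * n) × Fin (2 * n)) ℝ)
    (h01 : ∀ x y, A x y = 0 ∨ A x y = 1)
    (hdiag : ∀ x, A x x = 0)
    (hblocks : A + Aᵀ = (Matrix.of fun _ _ => (1 : ℝ))
      - Matrix.of (fun x y : Fin (2 * n) × Fin (2 * n) => if x.1 = y.1 then (1 : ℝ) else 0))
    (hdesign : A * Aᵀ = ((2 * n ^ 2 - n : ℝ)) • 1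
      + ((n ^ 2 - n : ℝ)) • ((Matrix.of fun _ _ => (1 : ℝ)) - 1)) :
    ∀ θ ∈ spectrum ℂ (A.map Complex.ofReal),
      θ = ((2 * n ^ 2 - n : ℝ) : ℂ) ∨ θ = (n : ℂ) * Complex.I ∨
      θ = -((n : ℂ) * Complex.I) ∨ θ = -(n : ℂ) := by
  intro θ hθ
  set J : Matrix (Fin (2 * n) × Fin (2 * n)) (Fin (2 * n) × Fin (2 * n)) ℝ :=
    Matrix.of fun _ _ => (1 : ℝ) with hJdef
  set Cm : Matrix (Fin (2 * n) × Fin (2 * n)) (Fin (2 * n) × Fin (2 * n)) ℝ :=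
    Matrix.of (fun x y : Fin (2 * n) × Fin (2 * n) => if x.1 = y.1 then (1 : ℝ) else 0)
    with hCdef
  have hsum1 : ∀ f : Fin (2 * n) → ℝ,
      ∑ z : Fin (2 * n) × Fin (2 * n), f z.1 = (2 * (n : ℝ)) * ∑ a, f a := by
    intro f
    have h := Fintype.sum_prod_type (f := fun z : Fin (2 * n) × Fin (2 * n) => f z.1)
    dsimp only at h
    rw [h]
    simp only [Finset.sum_const, Finset.card_univ, Fintype.card_fin, nsmul_eq_mul]
    rw [← Finset.mul_sum]
    push_cast
    ring
  have hJJ : J * J = (4 * (n : ℝ) ^ 2) • J := by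
    ext x y
    simp only [Matrix.mul_apply, hJdef, Matrix.of_apply, mul_one, Matrix.smul_apply,
      smul_eq_mul]
    rw [Finset.sum_const, Finset.card_univ]
    simp only [Fintype.card_prod, Fintype.card_fin, nsmul_eq_mul]
    push_cast
    ring
  have hJC : J * Cm = (2 * (n : ℝ)) • J := by
    ext x y
    simp only [Matrix.mul_apply, hJdef, hCdef, Matrix.of_apply, Matrix.smul_apply,
      smul_eq_mul, one_mul, mul_one]
    rw [hsum1 (fun a => if a = y.1 then (1 : ℝ) else 0)]
    simp
  have hCJ : Cm * J = (2 * (n : ℝ)) • J := by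
    ext x y
    simp only [Matrix.mul_apply, hJdef, hCdef, Matrix.of_apply, Matrix.smul_apply,
      smul_eq_mul, one_mul, mul_one]
    rw [hsum1 (fun a => if x.1 = a then (1 : ℝ) else 0)]
    simp
  have hCC : Cm * Cm = (2 * (n : ℝ)) • Cm := by
    ext x y
    simp only [Matrix.mul_apply, hCdef, Matrix.of_apply, Matrix.smul_apply, smul_eq_mul]
    rw [hsum1 (fun a => (if x.1 = a then (1 : ℝ) else 0) * (if a = y.1 then 1 else 0))]
    simp [Finset.sum_ite_eq]
  have hCT : Cmᵀ = Cm := by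
    ext x y
    simp only [Matrix.transpose_apply, hCdef, Matrix.of_apply]
    by_cases h : x.1 = y.1 <;> simp [h, eq_comm]
  have hJT : Jᵀ = J := by
    ext x y; simp [hJdef]
  -- row sums of A are 2n² - n
  have hrow : ∀ x, ∑ z, A x z = 2 * (n : ℝ) ^ 2 - n := by
    intro x
    have h := congrFun (congrFun hdesign x) x
    simp only [Matrix.mul_apply, Matrix.transpose_apply, Matrix.add_apply,
      Matrix.smul_apply, Matrix.one_apply_eq, Matrix.sub_apply, hJdef, Matrix.of_apply,
      smul_eq_mul, mul_one, sub_self, mul_zero, add_zero] at h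
    rw [← h]
    apply Finset.sum_congr rfl
    intro z _
    rcases h01 x z with h' | h' <;> simp [h']
  have hAJ : A * J = (2 * (n : ℝ) ^ 2 - n) • J := by
    ext x y
    simp only [Matrix.mul_apply, hJdef, Matrix.of_apply, Matrix.smul_apply, smul_eq_mul,
      mul_one]
    exact hrow x
  have hAT : Aᵀ = J - Cm - A := eq_sub_of_add_eq' hblocks
  have hJAT : J * Aᵀ = (2 * (n : ℝ) ^ 2 - n) • J := by
    have h : J * Aᵀ = (A * J)ᵀ := by rw [Matrix.transpose_mul, hJT]
    rw [h, hAJ, Matrix.transpose_smul, hJT]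
  have hJA : J * A = (2 * (n : ℝ) ^ 2 - n) • J := by
    have h1 : J * A = J * J - J * Cm - J * Aᵀ := by
      rw [hAT]; noncomm_ring
    rw [h1, hJJ, hJC, hJAT]
    module
  have hATC : Aᵀ * Cm = (2 * (n : ℝ)) • J - (2 * (n : ℝ)) • Cm - A * Cm := by
    rw [hAT, Matrix.sub_mul, Matrix.sub_mul, hJC, hCC]
  have hJACm : J * (A * Cm) = (2 * (n : ℝ) * (2 * (n : ℝ) ^ 2 - n)) • J := by
    rw [← Matrix.mul_assoc, hJA, Matrix.smul_mul, hJC, smul_smul]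
    ring_nf
  have hCAJ : Cm * A * J = (2 * (n : ℝ) * (2 * (n : ℝ) ^ 2 - n)) • J := by
    rw [Matrix.mul_assoc, hAJ, Matrix.mul_smul, hCJ, smul_smul]
    ring_nf
  -- key step : Cm * A = n • (J - Cm)
  have hCA : Cm * A = (n : ℝ) • J - (n : ℝ) • Cm := by
    have hMT : (Cm * A - ((n : ℝ) • J - (n : ℝ) • Cm))ᵀ
        = Aᵀ * Cm - ((n : ℝ) • J - (n : ℝ) • Cm) := by
      rw [Matrix.transpose_sub, Matrix.transpose_mul, Matrix.transpose_sub,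
        Matrix.transpose_smul, Matrix.transpose_smul, hCT, hJT]
    have e1 : (Cm * A) * (Aᵀ * Cm) = (2 * (n : ℝ) ^ 3) • Cm
        + (4 * (n : ℝ) ^ 2 * ((n : ℝ) ^ 2 - n)) • J := by
      have h : (Cm * A) * (Aᵀ * Cm) = Cm * (A * Aᵀ) * Cm := by noncomm_ring
      rw [h, hdesign]
      simp only [Matrix.mul_add, Matrix.add_mul, Matrix.mul_sub, Matrix.sub_mul,
        Matrix.mul_smul, Matrix.smul_mul, Matrix.mul_one, Matrix.one_mul,
        hCC, hCJ, hJC, hJJ, smul_smul]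
      module
    have hMM : (Cm * A - ((n : ℝ) • J - (n : ℝ) • Cm))
        * (Aᵀ * Cm - ((n : ℝ) • J - (n : ℝ) • Cm)) = 0 := by
      rw [Matrix.sub_mul, Matrix.mul_sub, Matrix.mul_sub, e1, hATC]
      simp only [Matrix.mul_sub, Matrix.sub_mul, Matrix.mul_smul, Matrix.smul_mul,
        hJJ, hJC, hCJ, hCC, hJACm, hCAJ, smul_smul, smul_sub]
      rw [show Cm * (A * Cm) = Cm * A * Cm from (Matrix.mul_assoc Cm A Cm).symm]
      module
    have hM0 : Cm * A - ((n : ℝ) • J - (n : ℝ) • Cm) = 0 := by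
      apply Matrix.self_mul_conjTranspose_eq_zero.mp
      rw [Matrix.conjTranspose_eq_transpose_of_trivial, hMT]
      exact hMM
    exact sub_eq_zero.mp hM0
  have hATC2 : Aᵀ * Cm = (n : ℝ) • J - (n : ℝ) • Cm := by
    have h : Aᵀ * Cm = (Cm * A)ᵀ := by rw [Matrix.transpose_mul, hCT]
    rw [h, hCA, Matrix.transpose_sub, Matrix.transpose_smul, Matrix.transpose_smul,
      hJT, hCT]
  have hAC : A * Cm = (n : ℝ) • J - (n : ℝ) • Cm := by
    have h : A * Cm + Aᵀ * Cm = (J - Cm) * Cm := by rw [← Matrix.add_mul, hblocks]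
    rw [Matrix.sub_mul, hJC, hCC, hATC2] at h
    rw [eq_sub_of_add_eq h]
    module
  have hA2 : A * A = ((n : ℝ) ^ 2 - n) • J + (n : ℝ) • Cm - ((n : ℝ) ^ 2) • 1 := by
    have h : A * A + A * Aᵀ = A * (J - Cm) := by rw [← Matrix.mul_add, hblocks]
    rw [Matrix.mul_sub, hAJ, hAC, hdesign] at h
    rw [eq_sub_of_add_eq h]
    module
  have hA3 : A * (A * A) = (((n : ℝ) ^ 2 - n) * (2 * (n : ℝ) ^ 2 - n) + (n : ℝ) ^ 2) • J
      - ((n : ℝ) ^ 2) • Cm - ((n : ℝ) ^ 2) • A := by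
    rw [hA2, Matrix.mul_sub, Matrix.mul_add, Matrix.mul_smul, Matrix.mul_smul,
      Matrix.mul_smul, Matrix.mul_one, hAJ, hAC]
    module
  have hP : A * (A * A) + (n : ℝ) • (A * A) + ((n : ℝ) ^ 2) • A + ((n : ℝ) ^ 3) • 1
      = (((n : ℝ) ^ 2 - n) * (2 * (n : ℝ) ^ 2 - n) + (n : ℝ) ^ 3) • J := by
    rw [hA3, hA2]
    module
  have hfac : (A + (n : ℝ) • 1) * (A * A + ((n : ℝ) ^ 2) • 1)
      = A * (A * A) + (n : ℝ) • (A * A) + ((n : ℝ) ^ 2) • A + ((n : ℝ) ^ 3) • 1 := by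
    simp only [Matrix.add_mul, Matrix.mul_add, Matrix.smul_mul, Matrix.mul_smul,
      Matrix.one_mul, Matrix.mul_one, smul_smul]
    module
  have hQ : (A - (2 * (n : ℝ) ^ 2 - n) • 1)
      * ((A + (n : ℝ) • 1) * (A * A + ((n : ℝ) ^ 2) • 1)) = 0 := by
    rw [hfac, hP, Matrix.sub_mul, Matrix.mul_smul, Matrix.smul_mul, Matrix.one_mul,
      hAJ, smul_smul]
    module
  -- transfer to ℂ
  have mapmul : ∀ M N : Matrix (Fin (2 * n) × Fin (2 * n)) (Fin (2 * n) × Fin (2 * n)) ℝ,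
      (M * N).map Complex.ofReal = M.map Complex.ofReal * N.map Complex.ofReal := by
    intro M N
    ext x y
    simp only [Matrix.map_apply, Matrix.mul_apply]
    push_cast
    ring
  have mapsub : ∀ M N : Matrix (Fin (2 * n) × Fin (2 * n)) (Fin (2 * n) × Fin (2 * n)) ℝ,
      (M - N).map Complex.ofReal = M.map Complex.ofReal - N.map Complex.ofReal := by
    intro M N
    ext x y
    simp only [Matrix.map_apply, Matrix.sub_apply]
    push_cast
    ring
  have mapadd : ∀ M N : Matrix (Fin (2 * n) × Fin (2 * n)) (Fin (2 * n) × Fin (2 * n)) ℝ,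
      (M + N).map Complex.ofReal = M.map Complex.ofReal + N.map Complex.ofReal := by
    intro M N
    ext x y
    simp only [Matrix.map_apply, Matrix.add_apply]
    push_cast
    ring
  have mapsmul : ∀ (r : ℝ) (M : Matrix (Fin (2 * n) × Fin (2 * n)) (Fin (2 * n) × Fin (2 * n)) ℝ),
      (r • M).map Complex.ofReal = ((r : ℂ)) • M.map Complex.ofReal := by
    intro r M
    ext x y
    simp only [Matrix.map_apply, Matrix.smul_apply, smul_eq_mul]
    push_cast
    ring
  have mapone : (1 : Matrix (Fin (2 * n) × Fin (2 * n)) (Fin (2 * n) × Fin (2 * n)) ℝ).map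
      Complex.ofReal = 1 := by
    ext x y
    by_cases h : x = y <;> simp [Matrix.map_apply, Matrix.one_apply, h]
  have hQC : (A.map Complex.ofReal + (-(2 * (n : ℂ) ^ 2 - n)) • 1)
      * ((A.map Complex.ofReal + (n : ℂ) • 1)
        * (A.map Complex.ofReal ^ 2 + ((n : ℂ) ^ 2) • 1)) = 0 := by
    have h := congrArg (fun M => M.map Complex.ofReal) hQ
    simp only [mapmul, mapsub, mapadd, mapsmul, mapone] at h
    have h0 : (0 : Matrix (Fin (2 * n) × Fin (2 * n)) (Fin (2 * n) × Fin (2 * n)) ℝ).map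
        Complex.ofReal = 0 := by
      ext x y; simp
    rw [h0] at h
    push_cast at h
    rw [neg_smul, ← sub_eq_add_neg,
      show A.map Complex.ofReal ^ 2 = A.map Complex.ofReal * A.map Complex.ofReal from sq _]
    exact h
  -- spectrum argument
  haveI : NeZero (2 * n) := ⟨by omega⟩
  have hmem := spectrum.subset_polynomial_aeval (A.map Complex.ofReal)
    ((Polynomial.X + Polynomial.C (-(2 * (n : ℂ) ^ 2 - n)))
      * ((Polynomial.X + Polynomial.C (n : ℂ))
        * (Polynomial.X ^ 2 + Polynomial.C ((n : ℂ) ^ 2)))) ⟨θ, hθ, rfl⟩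
  have hae : Polynomial.aeval (A.map Complex.ofReal)
      ((Polynomial.X + Polynomial.C (-(2 * (n : ℂ) ^ 2 - n)))
        * ((Polynomial.X + Polynomial.C (n : ℂ))
          * (Polynomial.X ^ 2 + Polynomial.C ((n : ℂ) ^ 2)))) = 0 := by
    simp only [Polynomial.aeval_mul, Polynomial.aeval_add, Polynomial.aeval_X_pow,
      Polynomial.aeval_X, Polynomial.aeval_C, Algebra.algebraMap_eq_smul_one]
    exact hQC
  rw [hae, spectrum.zero_eq] at hmem
  simp only [Set.mem_singleton_iff, Polynomial.eval_mul, Polynomial.eval_sub,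
    Polynomial.eval_add, Polynomial.eval_X, Polynomial.eval_C, Polynomial.eval_pow] at hmem
  rcases mul_eq_zero.mp hmem with h1 | h2
  · left
    have h1' := eq_neg_of_add_eq_zero_left h1
    rw [neg_neg] at h1'
    rw [h1']
    push_cast
    ring
  · rcases mul_eq_zero.mp h2 with h3 | h4
    · right; right; right
      exact eq_neg_of_add_eq_zero_left h3
    · have hfac2 : (θ - (n : ℂ) * Complex.I) * (θ + (n : ℂ) * Complex.I) = 0 := by
        linear_combination h4 - (n : ℂ) ^ 2 * Complex.I_sq
      rcases mul_eq_zero.mp hfac2 with h5 | h6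
      · right; left
        exact sub_eq_zero.mp h5
      · right; right; left
        exact eq_neg_of_add_eq_zero_left h6
end

section
/- Suppose A is a (1,−1)-matrix of order 4n² in 2n×2n blocks of size 2n such that A is a Hadamard matrix, each diagonal block equals J_{2n}, and A − I_{2n}⊗J_{2n} is skew-symmetric. Then each off-diagonal block A_{ij} (i ≠ j) satisfies A_{ij}J_{2n} = J_{2n}A_{ij} = 0, i.e., A is automatically skew-Bush-type. -/
/-!
Write `A = B + C` with `C = I ⊗ J`, so that `Bᴴ = -B`, `Cᴴ = C` and `C² = 2n C`. Sandwiching the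
Hadamard relation `(B + C)(C - B) = 4n² I` between two copies of `C` leaves `C B² C = 0`, that is
`(BC)ᴴ (BC) = 0`, hence `BC = 0` and, taking adjoints, `CB = 0`. So `AC = CA = 2n C`, which says
exactly that the off-diagonal blocks of `A` have zero row and column sums.
-/

open Matrix Finset

open scoped Kronecker

namespace Matrix

variable {ι R : Type*} [Fintype ι] [DecidableEq ι]
  [CommRing R] [PartialOrder R] [StarRing R] [StarOrderedRing R] [NoZeroDivisors R]

theorem mul_eq_zero_of_add_mul_conjTranspose_eq_smul_one {B C : Matrix ι ι R} {m : R}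
    (hB : Bᴴ = -B) (hC : Cᴴ = C) (hCC : C * C = m • C)
    (h : (B + C) * (B + C)ᴴ = m ^ 2 • 1) : B * C = 0 := by
  have hCBBC : C * (B * (B * C)) = 0 := by
    have h' := congrArg (fun M => C * M * C) h
    simp only [conjTranspose_add, hB, hC] at h'
    rw [show C * ((B + C) * (-B + C)) * C
        = C * B * (C * C) - C * (B * B) * C + (C * C) * (C * C) - (C * C) * B * C by
      noncomm_ring] at h'
    simp only [Matrix.mul_assoc, hCC, Matrix.mul_smul, Matrix.smul_mul, Matrix.mul_one,
      smul_smul] at h'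
    rw [show m ^ 2 * m = m * (m * m) by ring] at h'
    rw [← neg_eq_zero, ← sub_eq_zero.mpr h']
    abel
  have : (B * C)ᴴ * (B * C) = 0 := by
    rw [conjTranspose_mul, hB, hC, Matrix.mul_neg, Matrix.neg_mul, Matrix.mul_assoc, hCBBC,
      neg_zero]
  exact conjTranspose_mul_self_eq_zero.mp this

def blockOnes (κ α R : Type*) [DecidableEq κ] [Semiring R] : Matrix (κ × α) (κ × α) R :=
  (1 : Matrix κ κ R) ⊗ₖ of fun _ _ => 1

section BlockOnes

variable {κ α R : Type*} [DecidableEq κ] [Semiring R]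

theorem blockOnes_apply (x y : κ × α) :
    blockOnes κ α R x y = if x.1 = y.1 then 1 else 0 := by
  simp [blockOnes, one_apply]

theorem conjTranspose_blockOnes [StarRing R] : (blockOnes κ α R)ᴴ = blockOnes κ α R := by
  ext x y
  simp [blockOnes_apply, eq_comm, apply_ite star]

theorem mul_blockOnes_apply [Fintype κ] [Fintype α] {ι : Type*} (M : Matrix ι (κ × α) R)
    (x : ι) (j : κ) (b : α) : (M * blockOnes κ α R) x (j, b) = ∑ c, M x (j, c) := by
  simp only [mul_apply, blockOnes_apply, mul_ite, mul_one, mul_zero, Fintype.sum_prod_type]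
  rw [Finset.sum_comm]
  simp only [Finset.sum_ite_eq', mem_univ, if_true]

theorem blockOnes_mul_apply [Fintype κ] [Fintype α] {ι : Type*} (M : Matrix (κ × α) ι R)
    (i : κ) (a : α) (y : ι) : (blockOnes κ α R * M) (i, a) y = ∑ c, M (i, c) y := by
  simp only [mul_apply, blockOnes_apply, ite_mul, one_mul, zero_mul, Fintype.sum_prod_type]
  rw [Finset.sum_comm]
  simp only [Finset.sum_ite_eq, mem_univ, if_true]

theorem blockOnes_mul_self [Fintype κ] [Fintype α] :
    blockOnes κ α R * blockOnes κ α R = (Fintype.card α : R) • blockOnes κ α R := by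
  ext x ⟨j, b⟩
  simp only [mul_blockOnes_apply, blockOnes_apply, Matrix.smul_apply]
  split_ifs <;> simp

end BlockOnes

section SkewHadamard

variable {κ α R : Type*} [DecidableEq κ] {A : Matrix (κ × α) (κ × α) R}

theorem conjTranspose_sub_blockOnes [Ring R] [StarRing R] (hdiag : ∀ i a b, A (i, a) (i, b) = 1)
    (hskew : ∀ x y : κ × α, x.1 ≠ y.1 → A x y = -star (A y x)) :
    (A - blockOnes κ α R)ᴴ = -(A - blockOnes κ α R) := by
  ext ⟨i, a⟩ ⟨j, b⟩
  by_cases hij : i = j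
  · subst hij
    simp [blockOnes_apply, hdiag]
  · simp [blockOnes_apply, hij, Ne.symm hij, hskew (i, a) (j, b) hij]

variable [Fintype κ] [Fintype α] [DecidableEq α]
  [CommRing R] [PartialOrder R] [StarRing R] [StarOrderedRing R] [NoZeroDivisors R]

theorem sub_blockOnes_mul_blockOnes_eq_zero (hA : A * Aᴴ = (Fintype.card α : R) ^ 2 • 1)
    (hdiag : ∀ i a b, A (i, a) (i, b) = 1)
    (hskew : ∀ x y : κ × α, x.1 ≠ y.1 → A x y = -star (A y x)) :
    (A - blockOnes κ α R) * blockOnes κ α R = 0 :=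
  mul_eq_zero_of_add_mul_conjTranspose_eq_smul_one (conjTranspose_sub_blockOnes hdiag hskew)
    conjTranspose_blockOnes blockOnes_mul_self (by rwa [sub_add_cancel])

theorem sum_offDiagBlock_eq_zero (hA : A * Aᴴ = (Fintype.card α : R) ^ 2 • 1)
    (hdiag : ∀ i a b, A (i, a) (i, b) = 1)
    (hskew : ∀ x y : κ × α, x.1 ≠ y.1 → A x y = -star (A y x)) {i j : κ} (hij : i ≠ j) :
    (∀ a, ∑ b, A (i, a) (j, b) = 0) ∧ (∀ b, ∑ a, A (i, a) (j, b) = 0) := by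
  have hBC := sub_blockOnes_mul_blockOnes_eq_zero hA hdiag hskew
  have hCB : blockOnes κ α R * (A - blockOnes κ α R) = 0 := by
    simpa only [conjTranspose_mul, conjTranspose_sub_blockOnes hdiag hskew,
      conjTranspose_blockOnes, conjTranspose_zero, Matrix.mul_neg, neg_eq_zero] using
      congrArg conjTranspose hBC
  rw [Matrix.sub_mul, sub_eq_zero, blockOnes_mul_self] at hBC
  rw [Matrix.mul_sub, sub_eq_zero, blockOnes_mul_self] at hCB
  constructor
  · intro a
    rw [← mul_blockOnes_apply A (i, a) j a, hBC]
    simp [blockOnes_apply, hij]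
  · intro b
    rw [← blockOnes_mul_apply A i b (j, b), hCB]
    simp [blockOnes_apply, hij]

end SkewHadamard

end Matrix

theorem skew_hadamard_auto_bush_general (n : ℕ)
    (A : Matrix (Fin (2 * n) × Fin (2 * n)) (Fin (2 * n) × Fin (2 * n)) ℝ)
    (hHad : A * Aᵀ = ((4 * n ^ 2 : ℝ)) • 1)
    (hdiagblk : ∀ (i : Fin (2 * n)) (a b : Fin (2 * n)), A (i, a) (i, b) = 1)
    (hskew : ∀ x y : Fin (2 * n) × Fin (2 * n), x.1 ≠ y.1 → A x y = -A y x) :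
    ∀ i j : Fin (2 * n), i ≠ j →
      (∀ a, ∑ b, A (i, a) (j, b) = 0) ∧ (∀ b, ∑ a, A (i, a) (j, b) = 0) := by
  intro i j hij
  refine sum_offDiagBlock_eq_zero ?_ hdiagblk (fun x y h => by rw [hskew x y h, star_trivial]) hij
  rw [conjTranspose_eq_transpose_of_trivial, hHad, Fintype.card_fin]
  push_cast
  ring_nf

/-- A Hadamard matrix of order `4n²` whose diagonal `2n × 2n` blocks all equal
`J_{2n}` and such that `A - I_{2n} ⊗ J_{2n}` is skew-symmetric automatically has
all off-diagonal blocks with vanishing row and column sums, i.e. it is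
skew-Bush-type. -/
theorem skew_hadamard_auto_bush (n : ℕ) (hn : 0 < n)
    (A : Matrix (Fin (2 * n) × Fin (2 * n)) (Fin (2 * n) × Fin (2 * n)) ℝ)
    (hpm : ∀ x y, A x y = 1 ∨ A x y = -1)
    (hHad : A * Aᵀ = ((4 * n ^ 2 : ℝ)) • 1)
    (hdiagblk : ∀ (i : Fin (2 * n)) (a b : Fin (2 * n)), A (i, a) (i, b) = 1)
    (hskew : ∀ x y : Fin (2 * n) × Fin (2 * n), x.1 ≠ y.1 → A x y = -A y x) :
    ∀ i j : Fin (2 * n), i ≠ j →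
      (∀ a, ∑ b, A (i, a) (j, b) = 0) ∧ (∀ b, ∑ a, A (i, a) (j, b) = 0) :=
  skew_hadamard_auto_bush_general n A hHad hdiagblk hskew
end
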